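/- arXiv:2006.00978 — 3 statements merged into one kernel-verified Lean document; each statement's English description precedes it below -/
import Mathlib

section
/- Let N be an L-layer fully-connected ReLU NN with input dimension d0 and hidden layer widths d_1, d_2, …, d_L. Then the maximal number of linear regions of N satisfies R_N ≤ Π_{l=1}^{L} Σ_{i=0}^{d0} C(d_l, i). -/
open Finset

noncomputable section

/-- Extend a finite vector (an element of `ℝ^p`) to all of `ℕ` by zero. -/
def inputExt1 {p : ℕ} (x : Fin p → ℝ) : ℕ → ℝ :=
  fun i => if h : i < p then x ⟨i, h⟩ else 0

/-- Post-activations `X^l` of a fully-connected ReLU NN with layer widths `d`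
(0-based neuron indices, extended by junk values). -/
def fcX (d : ℕ → ℕ) (W : ℕ → ℕ → ℕ → ℝ) (b : ℕ → ℕ → ℝ) (x : ℕ → ℝ) : ℕ → ℕ → ℝ
  | 0 => x
  | l + 1 => fun k =>
      max ((∑ c ∈ Finset.range (d l), W (l + 1) k c * fcX d W b x l c) + b (l + 1) k) 0

/-- Pre-activation `Z^l_k(x;θ)` (meaningful for `1 ≤ l`). -/
def fcZ (d : ℕ → ℕ) (W : ℕ → ℕ → ℕ → ℝ) (b : ℕ → ℕ → ℝ) (x : ℕ → ℝ) (l k : ℕ) : ℝ :=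
  (∑ c ∈ Finset.range (d (l - 1)), W l k c * fcX d W b x (l - 1) c) + b l k

/-- The activation region `R(P;θ)` of an `L`-layer fully-connected ReLU NN; `P l k = true`
encodes the sign `+1` and `P l k = false` the sign `−1` at hidden neuron `(l,k)`. -/
def fcRegion (L : ℕ) (d : ℕ → ℕ) (W : ℕ → ℕ → ℕ → ℝ) (b : ℕ → ℕ → ℝ)
    (P : ℕ → ℕ → Bool) : Set (Fin (d 0) → ℝ) :=
  {x | ∀ l k, 1 ≤ l → l ≤ L → k < d l →
    (if P l k then 0 < fcZ d W b (inputExt1 x) l k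
     else fcZ d W b (inputExt1 x) l k < 0)}

/-- `R_{N,θ}`: the number of (distinct) nonempty activation regions. -/
def fcNumRegions (L : ℕ) (d : ℕ → ℕ) (W : ℕ → ℕ → ℕ → ℝ) (b : ℕ → ℕ → ℝ) : ℕ :=
  Set.ncard {R : Set (Fin (d 0) → ℝ) | (∃ P, R = fcRegion L d W b P) ∧ R.Nonempty}

/-- `R_N = max_θ R_{N,θ}`. -/
def fcMaxRegions (L : ℕ) (d : ℕ → ℕ) : ℕ :=
  sSup {m | ∃ W b, m = fcNumRegions L d W b}

def affEval {p : ℕ} (w : Fin p → ℝ) (c : ℝ) (x : Fin p → ℝ) : ℝ := (∑ j, w j * x j) + c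

def signOK {p n : ℕ} (w : Fin n → Fin p → ℝ) (c : Fin n → ℝ) (s : Fin n → Bool)
    (x : Fin p → ℝ) : Prop :=
  ∀ i, if s i then 0 < affEval (w i) (c i) x else affEval (w i) (c i) x < 0

def signSet (p n : ℕ) (w : Fin n → Fin p → ℝ) (c : Fin n → ℝ) : Set (Fin n → Bool) :=
  {s | ∃ x, signOK w c s x}

lemma pascal_sum (n p : ℕ) :
    ∑ i ∈ range (p+1), (n+1).choose i
      = ∑ i ∈ range (p+1), n.choose i + ∑ i ∈ range p, n.choose i := by
  induction p with
  | zero => simp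
  | succ p ih =>
      rw [Finset.sum_range_succ (fun i => (n+1).choose i) (p+1), ih,
          Finset.sum_range_succ (fun i => n.choose i) (p+1),
          Finset.sum_range_succ (fun i => n.choose i) p,
          Nat.choose_succ_succ]
      ring

lemma affEval_combo {p : ℕ} (w : Fin p → ℝ) (c : ℝ) (x y : Fin p → ℝ) (t : ℝ) :
    affEval w c (fun j => (1-t) * x j + t * y j)
      = (1-t) * affEval w c x + t * affEval w c y := by
  unfold affEval
  have h : ∀ j, w j * ((1-t) * x j + t * y j) = (1-t)*(w j * x j) + t*(w j * y j) :=
    fun j => by ring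
  simp only [h, Finset.sum_add_distrib, ← Finset.mul_sum]
  ring

lemma restrict_eval {p : ℕ} (v u : Fin (p+1) → ℝ) (cv cu : ℝ) (j0 : Fin (p+1))
    (hW : u j0 ≠ 0) (z : Fin (p+1) → ℝ) (hz : affEval u cu z = 0) :
    affEval (fun j => v (j0.succAbove j) - (v j0 / u j0) * u (j0.succAbove j))
      (cv - (v j0 / u j0) * cu) (fun j => z (j0.succAbove j)) = affEval v cv z := by
  have hK : (v j0 / u j0) * u j0 = v j0 := div_mul_cancel₀ _ hW
  unfold affEval at *
  rw [Fin.sum_univ_succAbove (fun j => v j * z j) j0]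
  rw [Fin.sum_univ_succAbove (fun j => u j * z j) j0] at hz
  simp only [sub_mul, Finset.sum_sub_distrib, mul_assoc, ← Finset.mul_sum]
  linear_combination (-(v j0 / u j0)) * hz + (z j0) * hK

lemma combo_pos {t u v : ℝ} (ht0 : 0 ≤ t) (ht1 : t ≤ 1) (hu : 0 < u) (hv : 0 < v) :
    0 < (1-t)*u + t*v := by
  rcases lt_or_ge t 1 with h | h
  · have h1 : 0 < (1-t)*u := mul_pos (by linarith) hu
    have h2 : 0 ≤ t*v := mul_nonneg ht0 hv.le
    linarith
  · have ht : t = 1 := le_antisymm ht1 h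
    subst ht; simpa using hv

lemma combo_neg {t u v : ℝ} (ht0 : 0 ≤ t) (ht1 : t ≤ 1) (hu : u < 0) (hv : v < 0) :
    (1-t)*u + t*v < 0 := by
  rcases lt_or_ge t 1 with h | h
  · have h1 : (1-t)*u < 0 := mul_neg_of_pos_of_neg (by linarith) hu
    have h2 : t*v ≤ 0 := mul_nonpos_of_nonneg_of_nonpos ht0 hv.le
    linarith
  · have ht : t = 1 := le_antisymm ht1 h
    subst ht; simpa using hv

lemma signSet_ncard_le : ∀ (n p : ℕ) (w : Fin n → Fin p → ℝ) (c : Fin n → ℝ),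
    (signSet p n w c).ncard ≤ ∑ i ∈ range (p+1), n.choose i := by
  intro n
  induction n with
  | zero =>
      intro p w c
      have h1 : (signSet p 0 w c).ncard ≤ ({(fun i => i.elim0)} : Set (Fin 0 → Bool)).ncard := by
        apply Set.ncard_le_ncard _ (Set.toFinite _)
        intro s _
        simp only [Set.mem_singleton_iff]
        funext i; exact i.elim0
      rw [Set.ncard_singleton] at h1
      refine h1.trans ?_
      have : (0:ℕ).choose 0 ≤ ∑ i ∈ range (p+1), (0:ℕ).choose i :=
        Finset.single_le_sum (fun i _ => Nat.zero_le _) (by simp)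
      simpa using this
  | succ n IH =>
      intro p w c
      set i0 : Fin (n+1) := Fin.last n with hi0
      set f : Fin (n+1) → (Fin p → ℝ) → ℝ := fun i x => affEval (w i) (c i) x with hf
      set S := signSet p (n+1) w c with hS
      set trunc : (Fin (n+1) → Bool) → (Fin n → Bool) := fun s i => s i.castSucc with htr
      set A : Set (Fin (n+1) → Bool) := {s ∈ S | s i0 = true} with hA
      set B : Set (Fin (n+1) → Bool) := {s ∈ S | s i0 = false} with hB
      have hinjA : Set.InjOn trunc A := by
        intro s hs s' hs' h
        funext i
        induction i using Fin.lastCases with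
        | last => rw [hs.2, hs'.2]
        | cast i => exact congrFun h i
      have hinjB : Set.InjOn trunc B := by
        intro s hs s' hs' h
        funext i
        induction i using Fin.lastCases with
        | last => rw [hs.2, hs'.2]
        | cast i => exact congrFun h i
      have hSAB : S = A ∪ B := by
        ext s
        constructor
        · intro hs
          rcases Bool.eq_false_or_eq_true (s i0) with h | h
          · exact Or.inl ⟨hs, h⟩
          · exact Or.inr ⟨hs, h⟩
        · rintro (h | h) <;> exact h.1
      have hdisj : Disjoint A B := by
        rw [Set.disjoint_left]
        rintro s ⟨_, h1⟩ ⟨_, h2⟩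
        rw [h1] at h2; exact Bool.noConfusion h2
      -- truncations land in the smaller sign set
      have htrS : ∀ s ∈ S, trunc s ∈ signSet p n (fun i => w i.castSucc) (fun i => c i.castSucc) := by
        rintro s ⟨x, hx⟩
        exact ⟨x, fun i => hx i.castSucc⟩
      have hcard : S.ncard ≤ (trunc '' A).ncard + (trunc '' B).ncard := by
        rw [hSAB, Set.ncard_union_eq hdisj (Set.toFinite _) (Set.toFinite _),
            Set.ncard_image_of_injOn hinjA, Set.ncard_image_of_injOn hinjB]
      have hsplit : (trunc '' A).ncard + (trunc '' B).ncard
          = (trunc '' A ∪ trunc '' B).ncard + (trunc '' A ∩ trunc '' B).ncard := by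
        rw [add_comm ((trunc '' A ∪ trunc '' B).ncard)]
        exact (Set.ncard_inter_add_ncard_union _ _ (Set.toFinite _) (Set.toFinite _)).symm
      have hUnion : (trunc '' A ∪ trunc '' B).ncard ≤ ∑ i ∈ range (p+1), n.choose i := by
        refine le_trans (Set.ncard_le_ncard ?_ (Set.toFinite _)) (IH p (fun i => w i.castSucc) (fun i => c i.castSucc))
        rintro s' (⟨s, hs, rfl⟩ | ⟨s, hs, rfl⟩)
        · exact htrS s hs.1
        · exact htrS s hs.1
      have hInter : (trunc '' A ∩ trunc '' B).ncard ≤ ∑ i ∈ range p, n.choose i := by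
        rcases Set.eq_empty_or_nonempty (trunc '' A ∩ trunc '' B) with he | hne
        · simp [he]
        · -- the intersection is nonempty: extract geometry
          obtain ⟨s0', hmem⟩ := hne
          obtain ⟨⟨sa0, hsa0, hsa0'⟩, ⟨sb0, hsb0, hsb0'⟩⟩ := hmem
          obtain ⟨x0, hx0⟩ := hsa0.1
          obtain ⟨y0, hy0⟩ := hsb0.1
          have hfx0 : 0 < affEval (w i0) (c i0) x0 := by
            have := hx0 i0; rw [hsa0.2] at this; simpa using this
          have hfy0 : affEval (w i0) (c i0) y0 < 0 := by
            have := hy0 i0; rw [hsb0.2] at this; simpa using this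
          have hwi0 : ∃ j0, w i0 j0 ≠ 0 := by
            by_contra h
            push_neg at h
            have e1 : affEval (w i0) (c i0) x0 = c i0 := by simp [affEval, h]
            have e2 : affEval (w i0) (c i0) y0 = c i0 := by simp [affEval, h]
            rw [e1] at hfx0; rw [e2] at hfy0; linarith
          obtain ⟨j0, hj0⟩ := hwi0
          obtain ⟨q, rfl⟩ : ∃ q, p = q + 1 := ⟨p - 1, by have := j0.isLt; omega⟩
          set W0 := w i0 j0 with hW0
          set w'' : Fin n → Fin q → ℝ := fun i j =>
            w i.castSucc (j0.succAbove j) - (w i.castSucc j0 / W0) * w i0 (j0.succAbove j)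
            with hw''
          set c'' : Fin n → ℝ := fun i => c i.castSucc - (w i.castSucc j0 / W0) * c i0 with hc''
          refine le_trans (Set.ncard_le_ncard ?_ (Set.toFinite _)) (IH q w'' c'')
          rintro s' ⟨⟨sa, hsaA, rfl⟩, sb, hsbB, htb⟩
          obtain ⟨x, hx⟩ := hsaA.1
          obtain ⟨y, hy⟩ := hsbB.1
          have hax : 0 < affEval (w i0) (c i0) x := by
            have := hx i0; rw [hsaA.2] at this; simpa using this
          have hby : affEval (w i0) (c i0) y < 0 := by
            have := hy i0; rw [hsbB.2] at this; simpa using this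
          set a := affEval (w i0) (c i0) x with ha
          set bb := affEval (w i0) (c i0) y with hbb
          have hab : (0:ℝ) < a - bb := by linarith
          set t := a / (a - bb) with htdef
          have ht0 : 0 ≤ t := div_nonneg hax.le hab.le
          have ht1 : t ≤ 1 := by rw [htdef, div_le_one hab]; linarith
          set z : Fin (q+1) → ℝ := fun j => (1-t) * x j + t * y j with hzdef
          have hz0 : affEval (w i0) (c i0) z = 0 := by
            rw [hzdef, affEval_combo, ← ha, ← hbb, htdef]
            field_simp
            ring
          refine ⟨fun j => z (j0.succAbove j), fun i => ?_⟩
          have heq : affEval (w'' i) (c'' i) (fun j => z (j0.succAbove j))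
              = affEval (w i.castSucc) (c i.castSucc) z :=
            restrict_eval _ _ _ _ j0 hj0 z hz0
          have hxi := hx i.castSucc
          have hyi := hy i.castSucc
          have hsi : sb i.castSucc = sa i.castSucc := congrFun htb i
          have hgoal : trunc sa i = sa i.castSucc := rfl
          rw [hgoal] at *
          cases hcase : sa i.castSucc with
          | true =>
              rw [hcase, if_pos rfl] at hxi
              rw [hsi, hcase, if_pos rfl] at hyi
              rw [if_pos rfl, heq, hzdef, affEval_combo]
              exact combo_pos ht0 ht1 hxi hyi
          | false =>
              rw [hcase] at hxi
              rw [hsi, hcase] at hyi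
              simp only [Bool.false_eq_true, if_false] at hxi hyi
              simp only [Bool.false_eq_true, if_false]
              rw [heq, hzdef, affEval_combo]
              exact combo_neg ht0 ht1 hxi hyi
      calc S.ncard ≤ (trunc '' A ∪ trunc '' B).ncard + (trunc '' A ∩ trunc '' B).ncard := by
              rw [← hsplit]; exact hcard
        _ ≤ ∑ i ∈ range (p+1), n.choose i + ∑ i ∈ range p, n.choose i :=
              Nat.add_le_add hUnion hInter
        _ = ∑ i ∈ range (p+1), (n+1).choose i := (pascal_sum n p).symm




def isCanon (L : ℕ) (d : ℕ → ℕ) (P : ℕ → ℕ → Bool) : Prop :=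
  ∀ l k, ¬(1 ≤ l ∧ l ≤ L ∧ k < d l) → P l k = false

def canonPat (L : ℕ) (d : ℕ → ℕ) (P : ℕ → ℕ → Bool) : ℕ → ℕ → Bool :=
  fun l k => if 1 ≤ l ∧ l ≤ L ∧ k < d l then P l k else false

def RPat (L : ℕ) (d : ℕ → ℕ) (W : ℕ → ℕ → ℕ → ℝ) (b : ℕ → ℕ → ℝ) : Set (ℕ → ℕ → Bool) :=
  {P | isCanon L d P ∧ (fcRegion L d W b P).Nonempty}

lemma isCanon_canonPat (L : ℕ) (d : ℕ → ℕ) (P : ℕ → ℕ → Bool) :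
    isCanon L d (canonPat L d P) := fun l k h => if_neg h

lemma fcRegion_canon (L : ℕ) (d : ℕ → ℕ) (W : ℕ → ℕ → ℕ → ℝ) (b : ℕ → ℕ → ℝ)
    (P : ℕ → ℕ → Bool) : fcRegion L d W b (canonPat L d P) = fcRegion L d W b P := by
  ext x
  constructor <;> intro h l k h1 h2 h3 <;> have hc : canonPat L d P l k = P l k :=
      if_pos ⟨h1, h2, h3⟩
  · have := h l k h1 h2 h3; rwa [hc] at this
  · have := h l k h1 h2 h3; rwa [hc]

lemma isCanon_finite (L : ℕ) (d : ℕ → ℕ) : {P : ℕ → ℕ → Bool | isCanon L d P}.Finite := by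
  classical
  apply Set.Finite.of_finite_image (f := fun (P : ℕ → ℕ → Bool) =>
    (fun (l : Fin (L+1)) (k : Fin (d l.1)) => P l.1 k.1))
  · exact Set.toFinite _
  · intro P hP P' hP' h
    funext l k
    by_cases hrel : 1 ≤ l ∧ l ≤ L ∧ k < d l
    · have hl : l < L + 1 := by omega
      exact congrFun (congrFun h ⟨l, hl⟩) ⟨k, hrel.2.2⟩
    · rw [hP l k hrel, hP' l k hrel]

/-! ### Linearization on a region -/

def linX (d : ℕ → ℕ) (W : ℕ → ℕ → ℕ → ℝ) (b : ℕ → ℕ → ℝ) (Q : ℕ → ℕ → Bool) :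
    ℕ → ℕ → ((Fin (d 0) → ℝ) × ℝ)
  | 0 => fun k => (fun j => if (j : ℕ) = k then 1 else 0, 0)
  | l + 1 => fun k =>
      if Q (l+1) k then
        (fun j => ∑ c ∈ Finset.range (d l), W (l+1) k c * (linX d W b Q l c).1 j,
         (∑ c ∈ Finset.range (d l), W (l+1) k c * (linX d W b Q l c).2) + b (l+1) k)
      else (0, 0)

def linZ (d : ℕ → ℕ) (W : ℕ → ℕ → ℕ → ℝ) (b : ℕ → ℕ → ℝ) (Q : ℕ → ℕ → Bool) (l k : ℕ) :
    ((Fin (d 0) → ℝ) × ℝ) :=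
  (fun j => ∑ c ∈ Finset.range (d (l-1)), W l k c * (linX d W b Q (l-1) c).1 j,
   (∑ c ∈ Finset.range (d (l-1)), W l k c * (linX d W b Q (l-1) c).2) + b l k)

lemma affEval_sum {p m : ℕ} (a : ℕ → ℝ) (g : ℕ → Fin p → ℝ) (h : ℕ → ℝ) (β : ℝ)
    (F : ℕ → ℝ) (x : Fin p → ℝ) (hF : ∀ c ∈ Finset.range m, F c = affEval (g c) (h c) x) :
    (∑ c ∈ Finset.range m, a c * F c) + β
      = affEval (fun j => ∑ c ∈ Finset.range m, a c * g c j)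
          ((∑ c ∈ Finset.range m, a c * h c) + β) x := by
  unfold affEval at *
  rw [Finset.sum_congr rfl (fun c hc => by rw [hF c hc])]
  simp only [mul_add, Finset.sum_add_distrib, Finset.mul_sum, Finset.sum_mul, mul_assoc]
  rw [Finset.sum_comm]
  ring

lemma linX_eval (d : ℕ → ℕ) (W : ℕ → ℕ → ℕ → ℝ) (b : ℕ → ℕ → ℝ) (Q : ℕ → ℕ → Bool)
    (L : ℕ) (x : Fin (d 0) → ℝ) (hx : x ∈ fcRegion L d W b Q) :
    ∀ l, l ≤ L → ∀ k, k < d l →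
      fcX d W b (inputExt1 x) l k = affEval (linX d W b Q l k).1 (linX d W b Q l k).2 x := by
  intro l
  induction l with
  | zero =>
      intro _ k hk
      show inputExt1 x k = _
      have h1 : ∀ j : Fin (d 0), (if ((j:ℕ) = k) then (1:ℝ) else 0) * x j
          = if j = ⟨k, hk⟩ then x j else 0 := by
        intro j
        by_cases h : (j:ℕ) = k
        · rw [if_pos h, if_pos (Fin.ext h), one_mul]
        · rw [if_neg h, if_neg (fun hc => h (by rw [hc])), zero_mul]
      simp only [linX, affEval, inputExt1, dif_pos hk]
      rw [Finset.sum_congr rfl (fun j _ => h1 j)]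
      simp
  | succ l IH =>
      intro hl k hk
      have hZ : fcZ d W b (inputExt1 x) (l+1) k
          = affEval (fun j => ∑ c ∈ Finset.range (d l), W (l+1) k c * (linX d W b Q l c).1 j)
              ((∑ c ∈ Finset.range (d l), W (l+1) k c * (linX d W b Q l c).2) + b (l+1) k) x := by
        unfold fcZ
        simp only [Nat.add_sub_cancel]
        exact affEval_sum _ _ _ _ _ x
          (fun c hc => IH (le_trans (Nat.le_succ l) hl) c (Finset.mem_range.1 hc))
      have hfcx : fcX d W b (inputExt1 x) (l+1) k = max (fcZ d W b (inputExt1 x) (l+1) k) 0 := by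
        show max _ 0 = max _ 0
        unfold fcZ
        simp only [Nat.add_sub_cancel]
      have hsign := hx (l+1) k (Nat.succ_le_succ (Nat.zero_le l)) hl hk
      cases hq : Q (l+1) k with
      | true =>
          rw [hq, if_pos rfl] at hsign
          rw [hfcx, max_eq_left hsign.le, hZ]
          simp only [linX, hq, if_pos rfl]
          simp
      | false =>
          rw [hq] at hsign
          simp only [Bool.false_eq_true, if_false] at hsign
          rw [hfcx, max_eq_right hsign.le]
          simp only [linX, hq, Bool.false_eq_true, if_false, affEval]
          simp

lemma linZ_eval (d : ℕ → ℕ) (W : ℕ → ℕ → ℕ → ℝ) (b : ℕ → ℕ → ℝ) (Q : ℕ → ℕ → Bool)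
    (L : ℕ) (x : Fin (d 0) → ℝ) (hx : x ∈ fcRegion L d W b Q) (l k : ℕ) (hl : l ≤ L) :
    fcZ d W b (inputExt1 x) (l+1) k
      = affEval (linZ d W b Q (l+1) k).1 (linZ d W b Q (l+1) k).2 x := by
  unfold fcZ linZ
  simp only [Nat.add_sub_cancel]
  exact affEval_sum _ _ _ _ _ x
    (fun c hc => linX_eval d W b Q L x hx l hl c (Finset.mem_range.1 hc))

/-! ### Main counting -/

lemma RPat_ncard_le (d : ℕ → ℕ) (W : ℕ → ℕ → ℕ → ℝ) (b : ℕ → ℕ → ℝ) :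
    ∀ L, (RPat L d W b).ncard
      ≤ ∏ l ∈ Finset.Icc 1 L, ∑ i ∈ Finset.range (d 0 + 1), (d l).choose i := by
  intro L
  induction L with
  | zero =>
      have hsub : RPat 0 d W b ⊆ {fun _ _ => false} := by
        rintro P ⟨hc, _⟩
        simp only [Set.mem_singleton_iff]
        funext l k
        exact hc l k (by omega)
      have h1 := Set.ncard_le_ncard hsub (Set.toFinite _)
      rw [Set.ncard_singleton] at h1
      simpa using h1
  | succ L IH =>
      classical
      have hfin : (RPat (L+1) d W b).Finite :=
        (isCanon_finite (L+1) d).subset (fun P hP => hP.1)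
      have hfinL : (RPat L d W b).Finite :=
        (isCanon_finite L d).subset (fun P hP => hP.1)
      set s : Finset (ℕ → ℕ → Bool) := hfin.toFinset with hs
      set Φ : (ℕ → ℕ → Bool) → (ℕ → ℕ → Bool) := canonPat L d with hΦdef
      set Bn : ℕ := ∑ i ∈ Finset.range (d 0 + 1), (d (L+1)).choose i with hBn
      -- membership translation
      have hmem : ∀ P, P ∈ s ↔ P ∈ RPat (L+1) d W b := fun P => hfin.mem_toFinset
      -- region inclusion: a point of the (L+1)-region lies in the L-region of Φ P
      have hreg : ∀ P x, x ∈ fcRegion (L+1) d W b P → x ∈ fcRegion L d W b (Φ P) := by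
        intro P x hx l k h1 h2 h3
        have hc : Φ P l k = P l k := if_pos ⟨h1, h2, h3⟩
        rw [hc]
        exact hx l k h1 (h2.trans (Nat.le_succ L)) h3
      -- Φ maps realizable patterns to realizable patterns
      have hΦmem : ∀ P ∈ s, Φ P ∈ RPat L d W b := by
        intro P hP
        rw [hmem] at hP
        obtain ⟨x, hx⟩ := hP.2
        exact ⟨isCanon_canonPat L d P, ⟨x, hreg P x hx⟩⟩
      -- fiber bound
      have hfiber : ∀ Q ∈ s.image Φ, (s.filter (fun P => Φ P = Q)).card ≤ Bn := by
        intro Q _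
        set zw : Fin (d (L+1)) → Fin (d 0) → ℝ := fun k => (linZ d W b Q (L+1) (k:ℕ)).1
        set zc : Fin (d (L+1)) → ℝ := fun k => (linZ d W b Q (L+1) (k:ℕ)).2
        have hcard : (signSet (d 0) (d (L+1)) zw zc).ncard
            ≤ Bn := signSet_ncard_le (d (L+1)) (d 0) zw zc
        rw [Set.ncard_eq_toFinset_card _ (Set.toFinite _)] at hcard
        refine le_trans (Finset.card_le_card_of_injOn
          (fun P => fun k : Fin (d (L+1)) => P (L+1) (k:ℕ)) ?_ ?_) hcard
        · -- maps into the sign set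
          intro P hP
          rw [Finset.mem_coe, Finset.mem_filter, hmem] at hP
          obtain ⟨⟨hcan, ⟨x, hx⟩⟩, hQ⟩ := hP
          have hxQ : x ∈ fcRegion L d W b Q := by rw [← hQ]; exact hreg P x hx
          rw [Finset.mem_coe, Set.Finite.mem_toFinset]
          refine ⟨x, fun k => ?_⟩
          have he : affEval (zw k) (zc k) x = fcZ d W b (inputExt1 x) (L+1) (k:ℕ) :=
            (linZ_eval d W b Q L x hxQ L (k:ℕ) (le_refl L)).symm
          rw [he]
          exact hx (L+1) (k:ℕ) (Nat.succ_le_succ (Nat.zero_le L)) (le_refl (L+1)) k.2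
        · -- injective on the fiber
          intro P hP P' hP' h
          rw [Finset.coe_filter, Set.mem_setOf] at hP hP'
          obtain ⟨hPs, hPQ⟩ := hP
          obtain ⟨hP's, hP'Q⟩ := hP'
          rw [hmem] at hPs hP's
          funext l k
          by_cases hrel : 1 ≤ l ∧ l ≤ L + 1 ∧ k < d l
          · rcases Nat.lt_or_ge l (L+1) with hlL | hlL
            · have h1 : Φ P l k = P l k := if_pos ⟨hrel.1, by omega, hrel.2.2⟩
              have h2 : Φ P' l k = P' l k := if_pos ⟨hrel.1, by omega, hrel.2.2⟩
              rw [← h1, ← h2, hPQ, hP'Q]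
            · have hl : l = L + 1 := by omega
              subst hl
              exact congrFun h ⟨k, hrel.2.2⟩
          · rw [hPs.1 l k hrel, hP's.1 l k hrel]
      -- assemble
      have himg : s.image Φ ⊆ hfinL.toFinset := by
        intro Q hQ
        rw [Finset.mem_image] at hQ
        obtain ⟨P, hP, rfl⟩ := hQ
        rw [Set.Finite.mem_toFinset]
        exact hΦmem P hP
      have hcount : s.card ≤ Bn * (RPat L d W b).ncard := by
        refine le_trans (Finset.card_le_mul_card_image s Bn hfiber) ?_
        rw [Set.ncard_eq_toFinset_card _ hfinL]
        exact Nat.mul_le_mul_left Bn (Finset.card_le_card himg)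
      rw [Set.ncard_eq_toFinset_card _ hfin, ← hs]
      calc s.card ≤ Bn * (RPat L d W b).ncard := hcount
        _ ≤ Bn * ∏ l ∈ Finset.Icc 1 L, ∑ i ∈ Finset.range (d 0 + 1), (d l).choose i :=
            Nat.mul_le_mul_left Bn IH
        _ = ∏ l ∈ Finset.Icc 1 (L+1), ∑ i ∈ Finset.range (d 0 + 1), (d l).choose i := by
            rw [Finset.prod_Icc_succ_top (by omega)]
            ring

lemma numRegions_le_RPat (L : ℕ) (d : ℕ → ℕ) (W : ℕ → ℕ → ℕ → ℝ) (b : ℕ → ℕ → ℝ) :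
    fcNumRegions L d W b ≤ (RPat L d W b).ncard := by
  have hfinL : (RPat L d W b).Finite := (isCanon_finite L d).subset (fun P hP => hP.1)
  have hsub : {R : Set (Fin (d 0) → ℝ) | (∃ P, R = fcRegion L d W b P) ∧ R.Nonempty}
      ⊆ (fcRegion L d W b) '' (RPat L d W b) := by
    rintro R ⟨⟨P, rfl⟩, hne⟩
    refine ⟨canonPat L d P, ⟨isCanon_canonPat L d P, ?_⟩, fcRegion_canon L d W b P⟩
    rw [fcRegion_canon]
    exact hne
  exact le_trans (Set.ncard_le_ncard hsub (hfinL.image _))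
    (Set.ncard_image_le hfinL)


/-- (Upper bound for fully-connected ReLU NNs.)
`R_N ≤ ∏_{l=1}^{L} ∑_{i=0}^{d_0} C(d_l, i)`. -/
theorem statement_14 (L : ℕ) (d : ℕ → ℕ) :
    fcMaxRegions L d
      ≤ ∏ l ∈ Finset.Icc 1 L, ∑ i ∈ Finset.range (d 0 + 1), (d l).choose i := by
  unfold fcMaxRegions
  apply csSup_le
  · exact ⟨fcNumRegions L d (fun _ _ _ => 0) (fun _ _ => 0),
      fun _ _ _ => 0, fun _ _ => 0, rfl⟩
  · rintro m ⟨W, b, rfl⟩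
    exact le_trans (numRegions_le_RPat L d W b) (RPat_ncard_le d W b L)

end
end

section
/- Fix positive integers d0 and L, and for each d let N(d) be the L-layer fully-connected ReLU NN with input dimension d0 and all hidden layer widths equal to d. Then there exist constants c1, c2 > 0 and D such that for all d ≥ D, c1·d^{L·d0} ≤ R_{N(d)} ≤ c2·d^{L·d0}. -/
open Finset

noncomputable section

/-- The set of strict sign patterns realizable by a family of `d` affine functions on `ι → ℝ`. -/
def realizSet (d : ℕ) {ι : Type} [Fintype ι] (w : Fin d → ι → ℝ) (β : Fin d → ℝ) :
    Set (Fin d → Bool) :=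
  {σ | ∃ t : ι → ℝ, ∀ i, if σ i then 0 < (∑ j, w i j * t j) + β i
    else (∑ j, w i j * t j) + β i < 0}

lemma affine_combo {ι : Type} [Fintype ι] (w : ι → ℝ) (β a c : ℝ) (hac : a + c = 1)
    (x y : ι → ℝ) :
    (∑ j, w j * (a * x j + c * y j)) + β
      = a * ((∑ j, w j * x j) + β) + c * ((∑ j, w j * y j) + β) := by
  have h : ∀ j ∈ (univ : Finset ι), w j * (a * x j + c * y j)
      = a * (w j * x j) + c * (w j * y j) := fun j _ => by ring
  rw [Finset.sum_congr rfl h, Finset.sum_add_distrib, ← Finset.mul_sum, ← Finset.mul_sum]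
  linear_combination (-β) * hac

lemma exists_convex_zero {ι : Type} [Fintype ι] (wl : ι → ℝ) (βl : ℝ) (t1 t2 : ι → ℝ)
    (h1 : 0 < (∑ j, wl j * t1 j) + βl) (h2 : (∑ j, wl j * t2 j) + βl < 0) :
    ∃ a c : ℝ, 0 < a ∧ 0 < c ∧ a + c = 1 ∧
      (∑ j, wl j * (a * t1 j + c * t2 j)) + βl = 0 := by
  set u := (∑ j, wl j * t1 j) + βl with hu
  set v := (∑ j, wl j * t2 j) + βl with hv
  have huv : 0 < u - v := by linarith
  have ha : 0 < -v / (u - v) := div_pos (by linarith) huv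
  have hc : 0 < u / (u - v) := div_pos h1 huv
  have hac : -v / (u - v) + u / (u - v) = 1 := by field_simp; ring
  refine ⟨-v / (u - v), u / (u - v), ha, hc, hac, ?_⟩
  rw [affine_combo wl βl _ _ hac t1 t2, ← hu, ← hv]
  field_simp
  ring

theorem realizSet_card (d : ℕ) : ∀ (ι : Type) [Fintype ι] [DecidableEq ι]
    (w : Fin d → ι → ℝ) (β : Fin d → ℝ),
    (realizSet d w β).ncard ≤ (d + 1) ^ (Fintype.card ι) := by
  induction d with
  | zero =>
    intro ι _ _ w β
    have h1 : (realizSet 0 w β).ncard ≤ (Set.univ : Set (Fin 0 → Bool)).ncard :=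
      Set.ncard_le_ncard (Set.subset_univ _) (Set.toFinite _)
    have h2 : (Set.univ : Set (Fin 0 → Bool)).ncard = 1 := by
      rw [Set.ncard_univ]; simp
    simpa [h2] using h1
  | succ d IH =>
    intro ι _ _ w β
    classical
    set A := realizSet (d + 1) w β with hA
    set At := A ∩ {σ | σ (Fin.last d) = true} with hAt
    set Af := A ∩ {σ | σ (Fin.last d) = false} with hAf
    set ρ : (Fin (d + 1) → Bool) → (Fin d → Bool) := fun σ => σ ∘ Fin.castSucc with hρ
    have hsplit : A = At ∪ Af := by
      ext σ; simp only [hAt, hAf, Set.mem_union, Set.mem_inter_iff, Set.mem_setOf_eq]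
      rcases Bool.eq_false_or_eq_true (σ (Fin.last d)) with h | h <;> tauto
    have hdisj : Disjoint At Af := by
      rw [Set.disjoint_iff]
      rintro σ ⟨⟨-, h1⟩, ⟨-, h2⟩⟩
      simp only [Set.mem_setOf_eq] at h1 h2
      rw [h1] at h2; exact absurd h2 (by simp)
    have hcardA : A.ncard = At.ncard + Af.ncard := by
      rw [hsplit, Set.ncard_union_eq hdisj (Set.toFinite _) (Set.toFinite _)]
    have hinj : ∀ bb : Bool, Set.InjOn ρ (A ∩ {σ | σ (Fin.last d) = bb}) := by
      rintro bb σ1 ⟨-, h1⟩ σ2 ⟨-, h2⟩ h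
      funext i
      refine Fin.lastCases ?_ ?_ i
      · simp only [Set.mem_setOf_eq] at h1 h2; rw [h1, h2]
      · intro i; exact congrFun h i
    have hit : (ρ '' At).ncard = At.ncard := Set.ncard_image_of_injOn (hinj true)
    have hif : (ρ '' Af).ncard = Af.ncard := Set.ncard_image_of_injOn (hinj false)
    have hui : (ρ '' At ∪ ρ '' Af).ncard + (ρ '' At ∩ ρ '' Af).ncard
        = At.ncard + Af.ncard := by
      rw [Set.ncard_union_add_ncard_inter _ _ (Set.toFinite _) (Set.toFinite _), hit, hif]
    have hBsub : ρ '' At ∪ ρ '' Af ⊆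
        realizSet d (fun i => w i.castSucc) (fun i => β i.castSucc) := by
      rintro σ' (⟨σ, ⟨⟨t, ht⟩, -⟩, rfl⟩ | ⟨σ, ⟨⟨t, ht⟩, -⟩, rfl⟩) <;>
        exact ⟨t, fun i => ht i.castSucc⟩
    have hBcard : (ρ '' At ∪ ρ '' Af).ncard ≤ (d + 1) ^ (Fintype.card ι) :=
      le_trans (Set.ncard_le_ncard hBsub (Set.toFinite _)) (IH ι _ _)
    rcases Set.eq_empty_or_nonempty (ρ '' At ∩ ρ '' Af) with he | hne
    · have : A.ncard ≤ (d + 1) ^ (Fintype.card ι) := by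
        rw [hcardA, ← hui, he]
        simpa using hBcard
      exact le_trans this (Nat.pow_le_pow_left (by omega) _)
    · have key : ∀ σ' ∈ ρ '' At ∩ ρ '' Af, ∃ t : ι → ℝ,
          ((∑ j, w (Fin.last d) j * t j) + β (Fin.last d) = 0) ∧
          ∀ i : Fin d, if σ' i then 0 < (∑ j, w i.castSucc j * t j) + β i.castSucc
            else (∑ j, w i.castSucc j * t j) + β i.castSucc < 0 := by
        rintro σ' ⟨⟨σ1, ⟨⟨t1, ht1⟩, hl1⟩, he1⟩, ⟨σ2, ⟨⟨t2, ht2⟩, hl2⟩, he2⟩⟩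
        simp only [Set.mem_setOf_eq] at hl1 hl2
        have hpos : 0 < (∑ j, w (Fin.last d) j * t1 j) + β (Fin.last d) := by
          have := ht1 (Fin.last d); rw [hl1] at this; simpa using this
        have hneg : (∑ j, w (Fin.last d) j * t2 j) + β (Fin.last d) < 0 := by
          have := ht2 (Fin.last d); rw [hl2] at this; simpa using this
        obtain ⟨a, c, ha, hc, hac, hzero⟩ :=
          exists_convex_zero (w (Fin.last d)) (β (Fin.last d)) t1 t2 hpos hneg
        refine ⟨fun j => a * t1 j + c * t2 j, hzero, fun i => ?_⟩
        have e1 := ht1 i.castSucc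
        have e2 := ht2 i.castSucc
        have hσ1 : σ1 i.castSucc = σ' i := by rw [← he1]; rfl
        have hσ2 : σ2 i.castSucc = σ' i := by rw [← he2]; rfl
        rw [hσ1] at e1; rw [hσ2] at e2
        rw [affine_combo (w i.castSucc) (β i.castSucc) a c hac t1 t2]
        cases hσ : σ' i
        · rw [hσ] at e1 e2
          simp only [Bool.false_eq_true, if_false] at e1 e2 ⊢
          nlinarith
        · rw [hσ] at e1 e2
          simp only [if_true] at e1 e2 ⊢
          nlinarith
      -- the linear part of the last function is nonzero somewhere
      obtain ⟨σ0, hσ0⟩ := hne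
      obtain ⟨⟨σ1, ⟨⟨t1, ht1⟩, hl1⟩, -⟩, ⟨σ2, ⟨⟨t2, ht2⟩, hl2⟩, -⟩⟩ := hσ0
      simp only [Set.mem_setOf_eq] at hl1 hl2
      have hpos : 0 < (∑ j, w (Fin.last d) j * t1 j) + β (Fin.last d) := by
        have := ht1 (Fin.last d); rw [hl1] at this; simpa using this
      have hneg : (∑ j, w (Fin.last d) j * t2 j) + β (Fin.last d) < 0 := by
        have := ht2 (Fin.last d); rw [hl2] at this; simpa using this
      have hwj : ∃ j, w (Fin.last d) j ≠ 0 := by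
        by_contra hall
        push_neg at hall
        have z1 : (∑ j, w (Fin.last d) j * t1 j) = 0 :=
          Finset.sum_eq_zero fun j _ => by rw [hall j]; ring
        have z2 : (∑ j, w (Fin.last d) j * t2 j) = 0 :=
          Finset.sum_eq_zero fun j _ => by rw [hall j]; ring
        rw [z1] at hpos; rw [z2] at hneg; linarith
      obtain ⟨j, hj⟩ := hwj
      set wl := w (Fin.last d) with hwl
      set βl := β (Fin.last d) with hβl
      -- substituted affine system on ι' = {j' // j' ≠ j}
      set wg : Fin d → ι → ℝ :=
        fun i j'' => w i.castSucc j'' + w i.castSucc j * (-(wl j'') / wl j) with hwg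
      set w'' : Fin d → {j' : ι // j' ≠ j} → ℝ := fun i j' => wg i j'.1 with hw''
      set β'' : Fin d → ℝ := fun i => β i.castSucc + w i.castSucc j * (-βl / wl j) with hβ''
      have hsub : ∀ g : ι → ℝ, (∑ j' : {j' : ι // j' ≠ j}, g j'.1)
          = ∑ j'' ∈ univ.erase j, g j'' := by
        intro g
        exact (Finset.sum_subtype (univ.erase j) (fun x => by simp) g).symm
      have hsplit' : ∀ g : ι → ℝ, (∑ j'', g j'') = g j + ∑ j'' ∈ univ.erase j, g j'' := by
        intro g
        rw [Finset.add_sum_erase _ g (mem_univ j)]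
      have subst : ∀ t : ι → ℝ, (∑ j'', wl j'' * t j'') + βl = 0 →
          ∀ i : Fin d, (∑ j' : {j' : ι // j' ≠ j}, w'' i j' * t j'.1) + β'' i
            = (∑ j'', w i.castSucc j'' * t j'') + β i.castSucc := by
        intro t ht i
        have hlast : wl j * t j + (∑ j'' ∈ univ.erase j, wl j'' * t j'') + βl = 0 := by
          rw [hsplit' (fun j'' => wl j'' * t j'')] at ht
          linarith [ht]
        have e0 : (∑ j' : {j' : ι // j' ≠ j}, w'' i j' * t j'.1)
            = ∑ j'' ∈ univ.erase j, wg i j'' * t j'' :=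
          hsub (fun j'' => wg i j'' * t j'')
        have e1 : ∑ j'' ∈ univ.erase j, wg i j'' * t j''
            = (∑ j'' ∈ univ.erase j, w i.castSucc j'' * t j'')
              + (w i.castSucc j / wl j) * (-(∑ j'' ∈ univ.erase j, wl j'' * t j'')) := by
          rw [← Finset.sum_neg_distrib, Finset.mul_sum, ← Finset.sum_add_distrib]
          refine Finset.sum_congr rfl fun j'' _ => ?_
          rw [hwg]; ring
        rw [e0, e1, hsplit' (fun j'' => w i.castSucc j'' * t j'')]
        rw [hβ'']
        set E := ∑ j'' ∈ univ.erase j, wl j'' * t j'' with hE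
        set Ei := ∑ j'' ∈ univ.erase j, w i.castSucc j'' * t j'' with hEi
        have htj : t j = (-E - βl) / wl j := by
          rw [eq_div_iff hj]; linarith [hlast]
        rw [htj]
        field_simp
        ring
      -- the intersection is contained in the realizable set of the substituted system
      have hCsub : ρ '' At ∩ ρ '' Af ⊆ realizSet d w'' β'' := by
        intro σ' hσ'
        obtain ⟨t0, hz, hsigns⟩ := key σ' hσ'
        exact ⟨fun j' => t0 j'.1, fun i => by rw [subst t0 hz i]; exact hsigns i⟩
      have hcard' : Fintype.card {j' : ι // j' ≠ j} = Fintype.card ι - 1 := by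
        rw [Fintype.card_subtype_compl, Fintype.card_subtype_eq]
      have hCcard : (ρ '' At ∩ ρ '' Af).ncard ≤ (d + 1) ^ (Fintype.card ι - 1) := by
        calc (ρ '' At ∩ ρ '' Af).ncard ≤ (realizSet d w'' β'').ncard :=
              Set.ncard_le_ncard hCsub (Set.toFinite _)
          _ ≤ (d + 1) ^ (Fintype.card {j' : ι // j' ≠ j}) := IH _ _ _
          _ = (d + 1) ^ (Fintype.card ι - 1) := by rw [hcard']
      have hn : 1 ≤ Fintype.card ι := Fintype.card_pos_iff.mpr ⟨j⟩
      obtain ⟨n', hn'⟩ : ∃ n', Fintype.card ι = n' + 1 := ⟨Fintype.card ι - 1, by omega⟩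
      have final : A.ncard ≤ (d + 1) ^ (n' + 1) + (d + 1) ^ n' := by
        rw [hcardA, ← hui]
        have := hBcard
        rw [hn'] at this hCcard
        simp only [Nat.add_sub_cancel] at hCcard
        omega
      rw [hn']
      calc A.ncard ≤ (d + 1) ^ (n' + 1) + (d + 1) ^ n' := final
        _ = (d + 2) * (d + 1) ^ n' := by ring
        _ ≤ (d + 2) * (d + 2) ^ n' := by
            exact Nat.mul_le_mul_left _ (Nat.pow_le_pow_left (by omega) _)
        _ = (d + 1 + 1) ^ (n' + 1) := by ring

section UpperBound

variable (d0 d : ℕ) (W : ℕ → ℕ → ℕ → ℝ) (b : ℕ → ℕ → ℝ)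

/-- layer-width function: input width `d0`, all hidden widths `d`. -/
def dfun (d0 d : ℕ) : ℕ → ℕ := fun l => if l = 0 then d0 else d

lemma dfun_pos {d0 d l : ℕ} (hl : 1 ≤ l) : dfun d0 d l = d := if_neg (by omega)

/-- `x` satisfies the sign pattern `ρ` on all hidden layers `1,…,l`. -/
def SatUpTo (ρ : ℕ → ℕ → Bool) (l : ℕ) (x : Fin d0 → ℝ) : Prop :=
  ∀ l' k, 1 ≤ l' → l' ≤ l → k < d →
    (if ρ l' k then 0 < fcZ (dfun d0 d) W b (inputExt1 x) l' k
     else fcZ (dfun d0 d) W b (inputExt1 x) l' k < 0)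

lemma aff_sum {d0 n : ℕ} (w0 : ℕ → ℝ) (b0 : ℝ) (F : ℕ → ℝ) (v0 : ℕ → Fin d0 → ℝ)
    (c0 : ℕ → ℝ) (x : Fin d0 → ℝ)
    (h : ∀ c' ∈ Finset.range n, F c' = (∑ j, v0 c' j * x j) + c0 c') :
    (∑ c' ∈ Finset.range n, w0 c' * F c') + b0
      = (∑ j, (∑ c' ∈ Finset.range n, w0 c' * v0 c' j) * x j)
        + ((∑ c' ∈ Finset.range n, w0 c' * c0 c') + b0) := by
  calc (∑ c' ∈ Finset.range n, w0 c' * F c') + b0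
      = (∑ c' ∈ Finset.range n,
          ((∑ j, (w0 c' * v0 c' j) * x j) + w0 c' * c0 c')) + b0 := by
        refine congrArg (· + b0) (Finset.sum_congr rfl fun c' hc' => ?_)
        rw [h c' hc', mul_add, Finset.mul_sum]
        simp only [← mul_assoc]
    _ = ((∑ c' ∈ Finset.range n, ∑ j, (w0 c' * v0 c' j) * x j)
          + (∑ c' ∈ Finset.range n, w0 c' * c0 c')) + b0 := by
        rw [Finset.sum_add_distrib]
    _ = (∑ j, ∑ c' ∈ Finset.range n, (w0 c' * v0 c' j) * x j)
          + ((∑ c' ∈ Finset.range n, w0 c' * c0 c') + b0) := by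
        rw [Finset.sum_comm, add_assoc]
    _ = _ := by
        refine congrArg (· + _) (Finset.sum_congr rfl fun j _ => ?_)
        rw [Finset.sum_mul]

/-- On the region where a prefix pattern holds, post-activations are affine in the input. -/
lemma affX (ρ : ℕ → ℕ → Bool) :
    ∀ l, ∃ (v : ℕ → Fin d0 → ℝ) (c : ℕ → ℝ), ∀ k, k < dfun d0 d l → ∀ x : Fin d0 → ℝ,
      SatUpTo d0 d W b ρ l x →
      fcX (dfun d0 d) W b (inputExt1 x) l k = (∑ j, v k j * x j) + c k := by
  intro l
  induction l with
  | zero =>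
    refine ⟨fun k j => if k = (j : ℕ) then 1 else 0, fun _ => 0, ?_⟩
    intro k hk x _
    have hk' : k < d0 := by simpa [dfun] using hk
    show inputExt1 x k = _
    rw [inputExt1, dif_pos hk']
    rw [Finset.sum_eq_single (⟨k, hk'⟩ : Fin d0)]
    · simp
    · intro j _ hj
      have : ¬ (k = (j : ℕ)) := fun h => hj (by ext; simp [← h])
      simp [this]
    · intro h; exact absurd (Finset.mem_univ _) h
  | succ l IH =>
    obtain ⟨v0, c0, h0⟩ := IH
    refine ⟨fun k => if ρ (l+1) k then
        (fun j => ∑ c' ∈ Finset.range (dfun d0 d l), W (l+1) k c' * v0 c' j)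
          else fun _ => 0,
      fun k => if ρ (l+1) k then
        (∑ c' ∈ Finset.range (dfun d0 d l), W (l+1) k c' * c0 c') + b (l+1) k else 0, ?_⟩
    intro k hk x hsat
    have hkd : k < d := by rwa [dfun_pos (by omega)] at hk
    have hsign := hsat (l+1) k (by omega) (le_refl _) hkd
    have hsat' : SatUpTo d0 d W b ρ l x := fun l' k' h1 h2 h3 => hsat l' k' h1 (by omega) h3
    have hX : fcX (dfun d0 d) W b (inputExt1 x) (l+1) k
        = max (fcZ (dfun d0 d) W b (inputExt1 x) (l+1) k) 0 := rfl
    cases hρ : ρ (l+1) k with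
    | false =>
      rw [hρ] at hsign
      simp only [Bool.false_eq_true, if_false] at hsign
      rw [hX, max_eq_right (le_of_lt hsign)]
      simp [hρ]
    | true =>
      rw [hρ] at hsign
      simp only [if_true] at hsign
      rw [hX, max_eq_left (le_of_lt hsign)]
      simp only [hρ, if_true]
      show (∑ c' ∈ Finset.range (dfun d0 d l),
          W (l+1) k c' * fcX (dfun d0 d) W b (inputExt1 x) l c') + b (l+1) k = _
      exact aff_sum _ _ _ _ _ _
        (fun c' hc' => h0 c' (Finset.mem_range.mp hc') x hsat')

/-- Pre-activations of the next layer are affine on a prefix region. -/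
lemma affZ (ρ : ℕ → ℕ → Bool) (l k : ℕ) :
    ∃ (v : Fin d0 → ℝ) (c : ℝ), ∀ x : Fin d0 → ℝ, SatUpTo d0 d W b ρ l x →
      fcZ (dfun d0 d) W b (inputExt1 x) (l+1) k = (∑ j, v j * x j) + c := by
  obtain ⟨v0, c0, h0⟩ := affX d0 d W b ρ l
  refine ⟨fun j => ∑ c' ∈ Finset.range (dfun d0 d l), W (l+1) k c' * v0 c' j,
    (∑ c' ∈ Finset.range (dfun d0 d l), W (l+1) k c' * c0 c') + b (l+1) k,
    fun x hsat => ?_⟩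
  show (∑ c' ∈ Finset.range (dfun d0 d l),
      W (l+1) k c' * fcX (dfun d0 d) W b (inputExt1 x) l c') + b (l+1) k = _
  exact aff_sum _ _ _ _ _ _
    (fun c' hc' => h0 c' (Finset.mem_range.mp hc') x hsat)

/-- Realizable truncated sign patterns on the first `l` hidden layers. -/
def nnRealiz (l : ℕ) : Set (Fin l → Fin d → Bool) :=
  {ρ | ∃ x : Fin d0 → ℝ, ∀ (i : Fin l) (k : Fin d),
    if ρ i k then 0 < fcZ (dfun d0 d) W b (inputExt1 x) ((i : ℕ) + 1) (k : ℕ)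
    else fcZ (dfun d0 d) W b (inputExt1 x) ((i : ℕ) + 1) (k : ℕ) < 0}

lemma nnRealiz_card : ∀ l, (nnRealiz d0 d W b l).ncard ≤ ((d + 1) ^ d0) ^ l := by
  intro l
  induction l with
  | zero =>
    have h1 : (nnRealiz d0 d W b 0).ncard
        ≤ (Set.univ : Set (Fin 0 → Fin d → Bool)).ncard :=
      Set.ncard_le_ncard (Set.subset_univ _) (Set.toFinite _)
    have h2 : (Set.univ : Set (Fin 0 → Fin d → Bool)).ncard = 1 := by
      rw [Set.ncard_univ]; simp
    simpa [h2] using h1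
  | succ l IH =>
    classical
    set A := nnRealiz d0 d W b (l + 1) with hA
    set r : (Fin (l+1) → Fin d → Bool) → (Fin l → Fin d → Bool) :=
      fun ρ i => ρ i.castSucc with hr
    set s : Finset (Fin (l+1) → Fin d → Bool) := (Set.toFinite A).toFinset with hs
    have hmem : ∀ a, a ∈ s ↔ a ∈ A := fun a => (Set.toFinite A).mem_toFinset
    -- each fiber of r over s has at most (d+1)^d0 elements
    have hfib : ∀ ρ' ∈ s.image r, (s.filter (fun ρ => r ρ = ρ')).card ≤ (d + 1) ^ d0 := by
      intro ρ' _
      set ρN : ℕ → ℕ → Bool := fun l' k =>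
        if h : 1 ≤ l' ∧ l' ≤ l ∧ k < d then ρ' ⟨l' - 1, by omega⟩ ⟨k, h.2.2⟩ else false
        with hρN
      have haffZ := fun k : ℕ => affZ d0 d W b ρN l k
      choose v c hvc using haffZ
      set wfam : Fin d → Fin d0 → ℝ := fun i => v (i : ℕ) with hwfam
      set βfam : Fin d → ℝ := fun i => c (i : ℕ) with hβfam
      set φ : (Fin (l+1) → Fin d → Bool) → (Fin d → Bool) := fun ρ => ρ (Fin.last l) with hφ
      set fib := s.filter (fun ρ => r ρ = ρ') with hfibdef
      have hinj : Set.InjOn φ (fib : Set (Fin (l+1) → Fin d → Bool)) := by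
        intro ρ1 h1 ρ2 h2 h
        simp only [Finset.coe_filter, Set.mem_setOf_eq, hfibdef] at h1 h2
        funext i k
        refine Fin.lastCases ?_ ?_ i
        · exact congrFun h k
        · intro i
          have := congrFun (h1.2.trans h2.2.symm) i
          exact congrFun this k
      have himg : φ '' (fib : Set _) ⊆ realizSet d wfam βfam := by
        rintro σ ⟨ρ, hρ, rfl⟩
        simp only [Finset.coe_filter, Set.mem_setOf_eq, hfibdef] at hρ
        obtain ⟨hρs, hρr⟩ := hρ
        obtain ⟨x, hx⟩ := (hmem ρ).mp hρs
        have hsat : SatUpTo d0 d W b ρN l x := by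
          intro l' k h1 h2 h3
          have hd : ρN l' k = ρ (Fin.castSucc ⟨l' - 1, by omega⟩) ⟨k, h3⟩ := by
            have h0 : ρN l' k = ρ' ⟨l' - 1, by omega⟩ ⟨k, h3⟩ := by
              simp only [hρN]
              exact dif_pos ⟨h1, h2, h3⟩
            rw [h0, ← hρr]
          have hx' := hx (Fin.castSucc ⟨l' - 1, by omega⟩) ⟨k, h3⟩
          have hl' : ((Fin.castSucc (⟨l' - 1, by omega⟩ : Fin l) : Fin (l+1)) : ℕ) + 1
              = l' := by simp; omega
          rw [hl'] at hx'
          rw [hd]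
          exact hx'
        refine ⟨x, fun i => ?_⟩
        have hx2 := hx (Fin.last l) i
        have hzi := hvc (i : ℕ) x hsat
        have hlast : ((Fin.last l : Fin (l+1)) : ℕ) + 1 = l + 1 := by simp
        rw [hlast] at hx2
        rw [hzi] at hx2
        exact hx2
      have e1 : (fib.card : ℕ) = (fib : Set (Fin (l+1) → Fin d → Bool)).ncard :=
        (Set.ncard_coe_finset _).symm
      calc fib.card = (fib : Set (Fin (l+1) → Fin d → Bool)).ncard := e1
        _ = (φ '' (fib : Set _)).ncard := (Set.ncard_image_of_injOn hinj).symm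
        _ ≤ (realizSet d wfam βfam).ncard := Set.ncard_le_ncard himg (Set.toFinite _)
        _ ≤ (d + 1) ^ (Fintype.card (Fin d0)) := realizSet_card d (Fin d0) wfam βfam
        _ = (d + 1) ^ d0 := by rw [Fintype.card_fin]
    have hcount : s.card ≤ (d + 1) ^ d0 * (s.image r).card :=
      Finset.card_le_mul_card_image s _ hfib
    have himgsub : (s.image r : Set (Fin l → Fin d → Bool)) ⊆ nnRealiz d0 d W b l := by
      intro ρ' hρ'
      simp only [Finset.coe_image, Set.mem_image, Finset.mem_coe] at hρ'
      obtain ⟨ρ, hρs, rfl⟩ := hρ'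
      obtain ⟨x, hx⟩ := (hmem ρ).mp hρs
      exact ⟨x, fun i k => hx i.castSucc k⟩
    have himgcard : (s.image r).card ≤ ((d + 1) ^ d0) ^ l := by
      have := Set.ncard_le_ncard himgsub (Set.toFinite _)
      rw [Set.ncard_coe_finset] at this
      exact le_trans this (IH)
    have hAcard : A.ncard = s.card := Set.ncard_eq_toFinset_card A (Set.toFinite A)
    calc A.ncard = s.card := hAcard
      _ ≤ (d + 1) ^ d0 * (s.image r).card := hcount
      _ ≤ (d + 1) ^ d0 * ((d + 1) ^ d0) ^ l := Nat.mul_le_mul_left _ himgcard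
      _ = ((d + 1) ^ d0) ^ (l + 1) := by rw [pow_succ, mul_comm]

end UpperBound

section Bridge

variable (L d0 d : ℕ) (W : ℕ → ℕ → ℕ → ℝ) (b : ℕ → ℕ → ℝ)

def extendPat (L d : ℕ) (ρ : Fin L → Fin d → Bool) : ℕ → ℕ → Bool :=
  fun l k => if h : 1 ≤ l ∧ l ≤ L ∧ k < d then ρ ⟨l - 1, by omega⟩ ⟨k, h.2.2⟩ else false

lemma regionSet_sub :
    {R : Set (Fin (dfun d0 d 0) → ℝ) |
        (∃ P, R = fcRegion L (dfun d0 d) W b P) ∧ R.Nonempty}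
      ⊆ (fun ρ => fcRegion L (dfun d0 d) W b (extendPat L d ρ)) '' (nnRealiz d0 d W b L) := by
  rintro R ⟨⟨P, rfl⟩, ⟨x, hx⟩⟩
  set ρ : Fin L → Fin d → Bool := fun i k => P ((i : ℕ) + 1) (k : ℕ) with hρ
  have hPe : ∀ l k, 1 ≤ l → l ≤ L → k < d → extendPat L d ρ l k = P l k := by
    intro l k h1 h2 h3
    have he : extendPat L d ρ l k = ρ ⟨l - 1, by omega⟩ ⟨k, h3⟩ := dif_pos ⟨h1, h2, h3⟩
    rw [he, hρ]
    show P ((l - 1) + 1) k = P l k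
    congr 1
    omega
  have hre : fcRegion L (dfun d0 d) W b P
      = fcRegion L (dfun d0 d) W b (extendPat L d ρ) := by
    ext y
    simp only [fcRegion, Set.mem_setOf_eq]
    constructor <;> intro h l k h1 h2 h3
    · have h3' : k < d := by rwa [dfun_pos h1] at h3
      rw [hPe l k h1 h2 h3']
      exact h l k h1 h2 h3
    · have h3' : k < d := by rwa [dfun_pos h1] at h3
      rw [← hPe l k h1 h2 h3']
      exact h l k h1 h2 h3
  refine ⟨ρ, ⟨x, fun i k => ?_⟩, hre.symm⟩
  have hkk : (k : ℕ) < dfun d0 d ((i : ℕ) + 1) := by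
    rw [dfun_pos (by omega)]; exact k.isLt
  exact hx ((i : ℕ) + 1) (k : ℕ) (by omega) (Nat.succ_le_of_lt i.isLt) hkk

lemma regionSet_finite :
    {R : Set (Fin (dfun d0 d 0) → ℝ) |
        (∃ P, R = fcRegion L (dfun d0 d) W b P) ∧ R.Nonempty}.Finite :=
  Set.Finite.subset ((Set.toFinite (nnRealiz d0 d W b L)).image _)
    (regionSet_sub L d0 d W b)

lemma fcNumRegions_le : fcNumRegions L (dfun d0 d) W b ≤ ((d + 1) ^ d0) ^ L := by
  have h1 := Set.ncard_le_ncard (regionSet_sub L d0 d W b)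
    ((Set.toFinite (nnRealiz d0 d W b L)).image _)
  have h2 := Set.ncard_image_le (s := nnRealiz d0 d W b L)
    (f := fun ρ => fcRegion L (dfun d0 d) W b (extendPat L d ρ)) (Set.toFinite _)
  exact le_trans h1 (le_trans h2 (nnRealiz_card d0 d W b L))

end Bridge

section Sawtooth

/-- Coefficients of the `m`-tooth sawtooth network. -/
def aCoef (m r : ℕ) : ℝ := if r = 0 then m else if Even r then 2 * m else -(2 * m)

/-- The `m`-tooth sawtooth map `[0,1] → [0,1]` as a sum of ReLUs. -/
def Tfun (m : ℕ) (t : ℝ) : ℝ :=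
  ∑ r ∈ Finset.range m, aCoef m r * max (t - (r : ℝ) / m) 0

lemma aCoef_sum (m : ℕ) : ∀ k : ℕ,
    (∑ r ∈ Finset.range (k + 1), aCoef m r) = if Even k then (m : ℝ) else -(m : ℝ) := by
  intro k
  induction k with
  | zero => simp [aCoef]
  | succ k IH =>
    rw [Finset.sum_range_succ, IH]
    by_cases hk : Even k
    · have h1 : ¬ Even (k + 1) := by simp [Nat.even_add_one, hk]
      simp [aCoef, hk, h1]
      ring
    · have h1 : Even (k + 1) := by simp [Nat.even_add_one, hk]
      have h2 : k + 1 ≠ 0 := by omega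
      simp [aCoef, hk, h1, h2]
      ring
  
lemma aCoef_sum' (m : ℕ) (hm : 1 ≤ m) : ∀ k : ℕ,
    (∑ r ∈ Finset.range (k + 1), aCoef m r * ((r : ℝ) / m))
      = if Even k then (k : ℝ) else -(k : ℝ) - 1 := by
  have hm0 : (m : ℝ) ≠ 0 := by positivity
  intro k
  induction k with
  | zero => simp [aCoef]
  | succ k IH =>
    rw [Finset.sum_range_succ, IH]
    by_cases hk : Even k
    · have h1 : ¬ Even (k + 1) := by simp [Nat.even_add_one, hk]
      have h2 : k + 1 ≠ 0 := by omega
      simp only [aCoef, hk, h1, h2, if_true, if_false, Nat.cast_succ]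
      field_simp
      ring
    · have h1 : Even (k + 1) := by simp [Nat.even_add_one, hk]
      simp only [aCoef, hk, h1, if_true, if_false, Nat.cast_succ,
        show k + 1 ≠ 0 by omega]
      field_simp
      ring

/-- On the `k`-th tooth interval, `Tfun` is the corresponding affine bijection onto `(0,1)`. -/
lemma Tfun_seg (m : ℕ) (hm : 1 ≤ m) (k : ℕ) (hk : k < m) (t : ℝ)
    (ht : t ∈ Set.Ioo ((k : ℝ) / m) (((k : ℝ) + 1) / m)) :
    Tfun m t = if Even k then (m : ℝ) * t - k else ((k : ℝ) + 1) - m * t := by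
  have hm0 : (0 : ℝ) < m := by exact_mod_cast hm
  obtain ⟨ht1, ht2⟩ := ht
  have hsplit : (∑ r ∈ Finset.range (k + 1), aCoef m r * max (t - (r : ℝ) / m) 0)
      + (∑ r ∈ Finset.Ico (k + 1) m, aCoef m r * max (t - (r : ℝ) / m) 0) = Tfun m t :=
    Finset.sum_range_add_sum_Ico _ (by omega)
  have hz : (∑ r ∈ Finset.Ico (k + 1) m, aCoef m r * max (t - (r : ℝ) / m) 0) = 0 := by
    refine Finset.sum_eq_zero fun r hr => ?_
    obtain ⟨hr1, _⟩ := Finset.mem_Ico.mp hr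
    have hle : t ≤ (r : ℝ) / m := by
      refine le_trans (le_of_lt ht2) ((div_le_div_iff_of_pos_right hm0).mpr ?_)
      exact_mod_cast hr1
    rw [max_eq_right (by linarith [hle] : t - (r : ℝ) / m ≤ 0)]
    ring
  have hfir : (∑ r ∈ Finset.range (k + 1), aCoef m r * max (t - (r : ℝ) / m) 0)
      = (∑ r ∈ Finset.range (k + 1), aCoef m r) * t
        - ∑ r ∈ Finset.range (k + 1), aCoef m r * ((r : ℝ) / m) := by
    rw [Finset.sum_mul, ← Finset.sum_sub_distrib]
    refine Finset.sum_congr rfl fun r hr => ?_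
    have hrk : r ≤ k := by
      have := Finset.mem_range.mp hr; omega
    have hge : (r : ℝ) / m ≤ (k : ℝ) / m := (div_le_div_iff_of_pos_right hm0).mpr (by exact_mod_cast hrk)
    rw [max_eq_left (by linarith : (0:ℝ) ≤ t - (r : ℝ) / m)]
    ring
  have := hsplit
  rw [hz, add_zero, hfir, aCoef_sum m k, aCoef_sum' m hm k] at this
  rw [← this]
  by_cases hek : Even k <;> simp [hek] <;> ring

end Sawtooth

section ScalarEx

lemma scalar_ex (m : ℕ) (hm : 1 ≤ m) :
    ∀ (n : ℕ) (ks : ℕ → ℕ), (∀ i, ks i < m) →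
    ∃ t : ℝ, t ∈ Set.Ioo (0 : ℝ) 1 ∧ ∀ l, l < n →
      (Tfun m)^[l] t ∈ Set.Ioo ((ks l : ℝ) / m) (((ks l : ℝ) + 1) / m) := by
  have hm0 : (0 : ℝ) < m := by exact_mod_cast hm
  intro n
  induction n with
  | zero =>
    intro ks _
    exact ⟨1/2, by constructor <;> norm_num, fun l hl => absurd hl (by omega)⟩
  | succ n IH =>
    intro ks hks
    obtain ⟨y, hy01, hy⟩ := IH (fun i => ks (i + 1)) (fun i => hks (i + 1))
    set k := ks 0 with hkdef
    have hk : k < m := hks 0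
    obtain ⟨hy0, hy1⟩ := hy01
    set t : ℝ := if Even k then ((y + k) / m) else (((k : ℝ) + 1 - y) / m) with htdef
    have htIoo : t ∈ Set.Ioo ((k : ℝ) / m) (((k : ℝ) + 1) / m) := by
      by_cases hek : Even k <;>
        simp only [htdef, hek, if_true, if_false] <;>
        constructor <;>
        · rw [div_lt_div_iff₀ hm0 hm0]
          nlinarith
    have ht01 : t ∈ Set.Ioo (0 : ℝ) 1 := by
      constructor
      · have h0 : (0 : ℝ) ≤ (k : ℝ) / m := by positivity
        linarith [htIoo.1]
      · have h1 : ((k : ℝ) + 1) / m ≤ 1 := by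
          rw [div_le_one hm0]
          exact_mod_cast Nat.succ_le_of_lt hk
        linarith [htIoo.2]
    have hTt : Tfun m t = y := by
      rw [Tfun_seg m hm k hk t htIoo]
      by_cases hek : Even k <;>
        simp only [htdef, hek, if_true, if_false] <;> field_simp <;> ring
    refine ⟨t, ht01, fun l hl => ?_⟩
    cases l with
    | zero => simpa using htIoo
    | succ l' =>
      rw [Function.iterate_succ_apply, hTt]
      exact hy l' (by omega)

end ScalarEx

section LowerNet

variable (d0 d m : ℕ)

/-- Weights of the lower-bound (sawtooth) network. -/
def Wlo (d0 m : ℕ) : ℕ → ℕ → ℕ → ℝ := fun l q c =>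
  if l = 1 then (if q < d0 * m ∧ c = q / m then 1 else 0)
  else (if q < d0 * m ∧ c < d0 * m ∧ c / m = q / m then aCoef m (c % m) else 0)

/-- Biases of the lower-bound network. -/
def blo (d0 m : ℕ) : ℕ → ℕ → ℝ := fun _ q =>
  if q < d0 * m then -((q % m : ℕ) : ℝ) / m else -1

lemma block_lt (j r : ℕ) (hj : j < d0) (hr : r < m) : j * m + r < d0 * m := by
  have h1 : (j + 1) * m ≤ d0 * m := Nat.mul_le_mul_right m (by omega)
  have h2 : (j + 1) * m = j * m + m := by ring
  omega

lemma block_div (j r : ℕ) (hr : r < m) : (j * m + r) / m = j := by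
  rw [Nat.mul_comm, Nat.mul_add_div (by omega)]
  simp [Nat.div_eq_of_lt hr]

lemma block_mod (j r : ℕ) (hr : r < m) : (j * m + r) % m = r := by
  rw [Nat.mul_comm, Nat.mul_add_mod]
  exact Nat.mod_eq_of_lt hr

/-- The key computation: pre-activations of the sawtooth network are shifted
iterates of the sawtooth map. -/
lemma fcZ_lo (hd0 : 1 ≤ d0) (hm : 1 ≤ m) (hdm : d0 * m ≤ d) (x : Fin d0 → ℝ) :
    ∀ l0 j r (hj : j < d0) (hr : r < m),
      fcZ (dfun d0 d) (Wlo d0 m) (blo d0 m) (inputExt1 x) (l0 + 1) (j * m + r)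
        = (Tfun m)^[l0] (x ⟨j, hj⟩) - (r : ℝ) / m := by
  intro l0
  induction l0 with
  | zero =>
    intro j r hj hr
    set q := j * m + r with hq
    have hqlt : q < d0 * m := block_lt d0 m j r hj hr
    have hqd : q / m = j := block_div m j r hr
    have hqm : q % m = r := block_mod m j r hr
    show (∑ c ∈ Finset.range (dfun d0 d 0), Wlo d0 m 1 q c * inputExt1 x c)
        + blo d0 m 1 q = _
    have hdf0 : dfun d0 d 0 = d0 := rfl
    rw [hdf0]
    have hsum : (∑ c ∈ Finset.range d0, Wlo d0 m 1 q c * inputExt1 x c)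
        = x ⟨j, hj⟩ := by
      rw [Finset.sum_eq_single j]
      · have hW : Wlo d0 m 1 q j = 1 := by
          unfold Wlo
          rw [if_pos (rfl : (1:ℕ) = 1),
            if_pos (⟨hqlt, hqd.symm⟩ : q < d0 * m ∧ j = q / m)]
        rw [hW, one_mul, inputExt1, dif_pos hj]
      · intro c _ hc
        have hW : Wlo d0 m 1 q c = 0 := by
          unfold Wlo
          rw [if_pos (rfl : (1:ℕ) = 1), if_neg (show ¬ (q < d0 * m ∧ c = q / m) from
            fun hcc => hc (hcc.2.trans hqd))]
        rw [hW, zero_mul]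
      · intro h
        exact absurd (Finset.mem_range.mpr hj) h
    rw [hsum]
    have hb : blo d0 m 1 q = -(r : ℝ) / m := by
      simp only [blo, if_pos hqlt, hqm]
    rw [hb]
    simp only [Function.iterate_zero, id_eq]
    ring
  | succ l0 IH =>
    intro j r hj hr
    set q := j * m + r with hq
    have hqlt : q < d0 * m := block_lt d0 m j r hj hr
    have hqd : q / m = j := block_div m j r hr
    have hqm : q % m = r := block_mod m j r hr
    have hXf : ∀ r', r' < m →
        fcX (dfun d0 d) (Wlo d0 m) (blo d0 m) (inputExt1 x) (l0 + 1) (j * m + r')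
          = max ((Tfun m)^[l0] (x ⟨j, hj⟩) - (r' : ℝ) / m) 0 := by
      intro r' hr'
      have : fcX (dfun d0 d) (Wlo d0 m) (blo d0 m) (inputExt1 x) (l0 + 1) (j * m + r')
          = max (fcZ (dfun d0 d) (Wlo d0 m) (blo d0 m) (inputExt1 x) (l0 + 1)
              (j * m + r')) 0 := rfl
      rw [this, IH j r' hj hr']
    show (∑ c ∈ Finset.range (dfun d0 d (l0 + 1)),
        Wlo d0 m (l0 + 2) q c * fcX (dfun d0 d) (Wlo d0 m) (blo d0 m) (inputExt1 x)
          (l0 + 1) c) + blo d0 m (l0 + 2) q = _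
    have hdf : dfun d0 d (l0 + 1) = d := dfun_pos (by omega)
    rw [hdf]
    set F : ℕ → ℝ := fun c => Wlo d0 m (l0 + 2) q c
      * fcX (dfun d0 d) (Wlo d0 m) (blo d0 m) (inputExt1 x) (l0 + 1) c with hF
    set S : Finset ℕ := (Finset.range m).image (fun r' => j * m + r') with hS
    have hSsub : S ⊆ Finset.range d := by
      intro c hc
      obtain ⟨r', hr', rfl⟩ := Finset.mem_image.mp hc
      have := block_lt d0 m j r' hj (Finset.mem_range.mp hr')
      exact Finset.mem_range.mpr (by omega)
    have hzero : ∀ c ∈ Finset.range d, c ∉ S → F c = 0 := by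
      intro c _ hcS
      have hnc : ¬ (q < d0 * m ∧ c < d0 * m ∧ c / m = q / m) := by
        rintro ⟨-, hc1, hc2⟩
        apply hcS
        have h1 : m * (c / m) + c % m = c := Nat.div_add_mod c m
        rw [hc2, hqd] at h1
        refine Finset.mem_image.mpr ⟨c % m, Finset.mem_range.mpr (Nat.mod_lt c (by omega)), ?_⟩
        rw [Nat.mul_comm j m]
        omega
      have hW : Wlo d0 m (l0 + 2) q c = 0 := by
        unfold Wlo
        rw [if_neg (by omega : ¬ l0 + 2 = 1), if_neg hnc]
      rw [hF]
      simp only [hW, zero_mul]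
    have hres : (∑ c ∈ Finset.range d, F c) = ∑ c ∈ S, F c :=
      (Finset.sum_subset hSsub hzero).symm
    have himg : (∑ c ∈ S, F c) = ∑ r' ∈ Finset.range m, F (j * m + r') := by
      rw [hS]
      exact Finset.sum_image (fun r1 _ r2 _ h => by omega)
    have hterm : ∀ r' ∈ Finset.range m, F (j * m + r')
        = aCoef m r' * max ((Tfun m)^[l0] (x ⟨j, hj⟩) - (r' : ℝ) / m) 0 := by
      intro r' hr'
      have hr'm := Finset.mem_range.mp hr'
      have hW : Wlo d0 m (l0 + 2) (q) (j * m + r') = aCoef m r' := by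
        unfold Wlo
        rw [if_neg (by omega : ¬ l0 + 2 = 1),
          if_pos (show q < d0 * m ∧ j * m + r' < d0 * m ∧ (j * m + r') / m = q / m from
          ⟨hqlt, block_lt d0 m j r' hj hr'm, by rw [block_div m j r' hr'm, hqd]⟩),
          block_mod m j r' hr'm]
      rw [hF]
      simp only [hW, hXf r' hr'm]
    have hb : blo d0 m (l0 + 2) q = -(r : ℝ) / m := by
      simp only [blo, if_pos hqlt, hqm]
    rw [hres, himg, Finset.sum_congr rfl hterm, hb]
    have hT : (∑ r' ∈ Finset.range m,
        aCoef m r' * max ((Tfun m)^[l0] (x ⟨j, hj⟩) - (r' : ℝ) / m) 0)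
          = Tfun m ((Tfun m)^[l0] (x ⟨j, hj⟩)) := rfl
    rw [hT, ← Function.iterate_succ_apply' (Tfun m) l0]
    ring

lemma fcZ_dead (x : Fin d0 → ℝ) (l q : ℕ) (hq : d0 * m ≤ q) :
    fcZ (dfun d0 d) (Wlo d0 m) (blo d0 m) (inputExt1 x) l q = -1 := by
  have hW : ∀ c, Wlo d0 m l q c = 0 := by
    intro c
    simp only [Wlo]
    split_ifs with h1 h2 h3
    · exact absurd h2.1 (by omega)
    · rfl
    · exact absurd h3.1 (by omega)
    · rfl
  show (∑ c ∈ Finset.range (dfun d0 d (l - 1)),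
      Wlo d0 m l q c * fcX (dfun d0 d) (Wlo d0 m) (blo d0 m) (inputExt1 x) (l - 1) c)
    + blo d0 m l q = -1
  rw [Finset.sum_eq_zero (fun c _ => by rw [hW c, zero_mul])]
  simp only [blo, if_neg (by omega : ¬ q < d0 * m)]
  ring

end LowerNet

section LowerCount

variable (L d0 d m : ℕ)

/-- The activation pattern associated with a choice of tooth in each layer and coordinate. -/
def patK (L d0 m : ℕ) (K : Fin L → Fin d0 → Fin m) : ℕ → ℕ → Bool := fun l k =>
  if h : 1 ≤ l ∧ l ≤ L ∧ k < d0 * m then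
    decide (k % m ≤ (K ⟨l - 1, by omega⟩ ⟨k / m, Nat.div_lt_of_lt_mul
      (Nat.mul_comm d0 m ▸ h.2.2)⟩ : ℕ))
  else false

lemma patK_eval (K : Fin L → Fin d0 → Fin m) (l : Fin L) (j : Fin d0) (r : ℕ)
    (hr : r < m) :
    patK L d0 m K ((l : ℕ) + 1) ((j : ℕ) * m + r) = decide (r ≤ (K l j : ℕ)) := by
  have hk : (j : ℕ) * m + r < d0 * m := block_lt d0 m j r j.isLt hr
  have h1 : ((j : ℕ) * m + r) % m = r := block_mod m (j : ℕ) r hr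
  have h2 : ((j : ℕ) * m + r) / m = (j : ℕ) := block_div m (j : ℕ) r hr
  unfold patK
  rw [dif_pos (show 1 ≤ (l : ℕ) + 1 ∧ (l : ℕ) + 1 ≤ L ∧ (j : ℕ) * m + r < d0 * m from
    ⟨by omega, by omega, hk⟩)]
  simp only [h1, h2, Nat.add_sub_cancel, Fin.eta]

lemma region_mem_cond (P : ℕ → ℕ → Bool) (x : Fin (dfun d0 d 0) → ℝ)
    (hx : x ∈ fcRegion L (dfun d0 d) (Wlo d0 m) (blo d0 m) P)
    (l : Fin L) (j : Fin d0) (r : ℕ) (hr : r < m) (hdm : d0 * m ≤ d) :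
    (if P ((l : ℕ) + 1) ((j : ℕ) * m + r) then
      0 < fcZ (dfun d0 d) (Wlo d0 m) (blo d0 m) (inputExt1 x) ((l : ℕ) + 1)
        ((j : ℕ) * m + r)
     else fcZ (dfun d0 d) (Wlo d0 m) (blo d0 m) (inputExt1 x) ((l : ℕ) + 1)
        ((j : ℕ) * m + r) < 0) := by
  have hk : (j : ℕ) * m + r < d0 * m := block_lt d0 m j r j.isLt hr
  exact hx ((l : ℕ) + 1) ((j : ℕ) * m + r) (by omega) (by omega)
    (by rw [dfun_pos (by omega)]; omega)

/-- Each tooth-choice pattern has a nonempty region. -/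
lemma region_nonempty (hd0 : 1 ≤ d0) (hm : 1 ≤ m) (hdm : d0 * m ≤ d)
    (K : Fin L → Fin d0 → Fin m) :
    (fcRegion L (dfun d0 d) (Wlo d0 m) (blo d0 m) (patK L d0 m K)).Nonempty := by
  have hm0 : (0 : ℝ) < m := by exact_mod_cast hm
  have hch : ∀ j : Fin d0, ∃ tj : ℝ, tj ∈ Set.Ioo (0 : ℝ) 1 ∧
      ∀ l' (hl' : l' < L), (Tfun m)^[l'] tj ∈
        Set.Ioo (((K ⟨l', hl'⟩ j : ℕ) : ℝ) / m) ((((K ⟨l', hl'⟩ j : ℕ) : ℝ) + 1) / m) := by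
    intro j
    obtain ⟨tj, h01, hIoo⟩ := scalar_ex m hm L
      (fun l' => if h : l' < L then (K ⟨l', h⟩ j : ℕ) else 0)
      (fun i => by
        show (if h : i < L then (K ⟨i, h⟩ j : ℕ) else 0) < m
        by_cases h : i < L
        · rw [dif_pos h]; exact (K _ j).isLt
        · rw [dif_neg h]; omega)
    refine ⟨tj, h01, fun l' hl' => ?_⟩
    have := hIoo l' hl'
    rwa [dif_pos hl'] at this
  choose t ht01 htI using hch
  refine ⟨t, ?_⟩
  intro l k h1 h2 h3
  rw [dfun_pos h1] at h3
  by_cases hk : k < d0 * m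
  · set j : ℕ := k / m with hjdef
    set r : ℕ := k % m with hrdef
    have hj : j < d0 := Nat.div_lt_of_lt_mul (Nat.mul_comm d0 m ▸ hk)
    have hr : r < m := Nat.mod_lt k (by omega)
    have hk' : j * m + r = k := by
      rw [Nat.mul_comm j m]
      exact Nat.div_add_mod k m
    have hl1 : l - 1 < L := by omega
    have hZ := fcZ_lo d0 d m hd0 hm hdm t (l - 1) j r hj hr
    rw [show l - 1 + 1 = l by omega] at hZ
    rw [hk'] at hZ
    have hP : patK L d0 m K l k = decide (r ≤ (K ⟨l - 1, hl1⟩ ⟨j, hj⟩ : ℕ)) := by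
      have := patK_eval L d0 m K ⟨l - 1, hl1⟩ ⟨j, hj⟩ r hr
      simp only [show (⟨l - 1, hl1⟩ : Fin L).val + 1 = l by simp; omega] at this
      rw [← hk']
      exact this
    have hIoo := htI ⟨j, hj⟩ (l - 1) hl1
    set Kv : ℕ := (K ⟨l - 1, hl1⟩ ⟨j, hj⟩ : ℕ) with hKv
    obtain ⟨hIoo1, hIoo2⟩ := hIoo
    rw [hP]; erw [hZ]
    by_cases hle : r ≤ Kv
    · rw [if_pos (by simpa using hle)]
      have : (r : ℝ) / m ≤ (Kv : ℝ) / m :=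
        (div_le_div_iff_of_pos_right hm0).mpr (by exact_mod_cast hle)
      linarith
    · rw [if_neg (by simpa using hle)]
      have hKr : Kv + 1 ≤ r := by omega
      have : ((Kv : ℝ) + 1) / m ≤ (r : ℝ) / m :=
        (div_le_div_iff_of_pos_right hm0).mpr (by exact_mod_cast hKr)
      linarith
  · have hP : patK L d0 m K l k = false := by
      unfold patK
      rw [dif_neg (by omega)]
    rw [hP]
    have hZ := fcZ_dead d0 d m t l k (by omega)
    rw [if_neg (by simp)]
    erw [hZ]
    norm_num

/-- Distinct tooth choices give disjoint (hence distinct) regions. -/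
lemma region_inj (hd0 : 1 ≤ d0) (hm : 1 ≤ m) (hdm : d0 * m ≤ d)
    (K1 K2 : Fin L → Fin d0 → Fin m) (hne : K1 ≠ K2) :
    fcRegion L (dfun d0 d) (Wlo d0 m) (blo d0 m) (patK L d0 m K1)
      ≠ fcRegion L (dfun d0 d) (Wlo d0 m) (blo d0 m) (patK L d0 m K2) := by
  have hx := region_nonempty L d0 d m hd0 hm hdm K1
  obtain ⟨x, hx1⟩ := hx
  intro heq
  have hx2 : x ∈ fcRegion L (dfun d0 d) (Wlo d0 m) (blo d0 m) (patK L d0 m K2) := by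
    rw [← heq]; exact hx1
  have : ¬ ∀ l j, K1 l j = K2 l j := fun h => hne (funext fun l => funext fun j => h l j)
  push_neg at this
  obtain ⟨l, j, hlj⟩ := this
  set r : ℕ := max (K1 l j : ℕ) (K2 l j : ℕ) with hrdef
  have hrm : r < m := by
    have := (K1 l j).isLt; have := (K2 l j).isLt; omega
  have hc1 := region_mem_cond L d0 d m _ x hx1 l j r hrm hdm
  have hc2 := region_mem_cond L d0 d m _ x hx2 l j r hrm hdm
  rw [patK_eval L d0 m K1 l j r hrm] at hc1
  rw [patK_eval L d0 m K2 l j r hrm] at hc2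
  have hvne : (K1 l j : ℕ) ≠ (K2 l j : ℕ) := fun h => hlj (Fin.ext h)
  rcases Nat.lt_or_ge (K1 l j : ℕ) (K2 l j : ℕ) with h | h
  · rw [if_neg (by simp; omega), ] at hc1
    rw [if_pos (by simp [hrdef]; omega)] at hc2
    linarith
  · rw [if_pos (by simp [hrdef]; omega)] at hc1
    rw [if_neg (by simp; omega)] at hc2
    linarith

/-- Lower bound for the number of regions of the sawtooth network. -/
lemma lower_count (hd0 : 1 ≤ d0) (hm : 1 ≤ m) (hdm : d0 * m ≤ d) :
    m ^ (L * d0) ≤ fcNumRegions L (dfun d0 d) (Wlo d0 m) (blo d0 m) := by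
  classical
  set F : (Fin L → Fin d0 → Fin m) → Set (Fin (dfun d0 d 0) → ℝ) :=
    fun K => fcRegion L (dfun d0 d) (Wlo d0 m) (blo d0 m) (patK L d0 m K) with hF
  have hinj : Function.Injective F := by
    intro K1 K2 h
    by_contra hne
    exact region_inj L d0 d m hd0 hm hdm K1 K2 hne h
  have hrange : Set.range F ⊆
      {R : Set (Fin (dfun d0 d 0) → ℝ) |
        (∃ P, R = fcRegion L (dfun d0 d) (Wlo d0 m) (blo d0 m) P) ∧ R.Nonempty} := by
    rintro R ⟨K, rfl⟩
    exact ⟨⟨patK L d0 m K, rfl⟩, region_nonempty L d0 d m hd0 hm hdm K⟩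
  have hcards : (Set.range F).ncard = m ^ (L * d0) := by
    rw [← Set.image_univ, Set.ncard_image_of_injective _ hinj, Set.ncard_univ,
      Nat.card_eq_fintype_card]
    rw [Fintype.card_fun]
    rw [Fintype.card_fun, Fintype.card_fin, Fintype.card_fin, Fintype.card_fin]
    rw [← pow_mul, Nat.mul_comm d0 L]
  calc m ^ (L * d0) = (Set.range F).ncard := hcards.symm
    _ ≤ _ := Set.ncard_le_ncard hrange
        (regionSet_finite L d0 d (Wlo d0 m) (blo d0 m))

end LowerCount


lemma fcMax_ub (L d0 d : ℕ) : fcMaxRegions L (dfun d0 d) ≤ ((d + 1) ^ d0) ^ L := by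
  have hne : {n | ∃ W b, n = fcNumRegions L (dfun d0 d) W b}.Nonempty :=
    ⟨fcNumRegions L (dfun d0 d) 0 0, ⟨0, 0, rfl⟩⟩
  apply csSup_le hne
  rintro n ⟨W, b, rfl⟩
  exact fcNumRegions_le L d0 d W b

lemma fcMax_lb (L d0 d m : ℕ) (hd0 : 1 ≤ d0) (hm : 1 ≤ m) (hdm : d0 * m ≤ d) :
    m ^ (L * d0) ≤ fcMaxRegions L (dfun d0 d) := by
  refine le_trans (lower_count L d0 d m hd0 hm hdm) (le_csSup ?_ ⟨Wlo d0 m, blo d0 m, rfl⟩)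
  refine ⟨((d + 1) ^ d0) ^ L, ?_⟩
  rintro n ⟨W, b, rfl⟩
  exact fcNumRegions_le L d0 d W b

/-- For fixed `d0` and `L`, the `L`-layer fully-connected ReLU NN with input
dimension `d0` and all hidden widths equal to `d` satisfies `R_{N(d)} = Θ(d^{L·d0})` as
`d → ∞`. -/
theorem statement_15 (L d0 : ℕ) (hL : 0 < L) (hd0 : 0 < d0) :
    ∃ c1 c2 : ℝ, 0 < c1 ∧ 0 < c2 ∧ ∃ D : ℕ, ∀ d ≥ D,
      c1 * (d : ℝ) ^ (L * d0)
          ≤ (fcMaxRegions L (fun l => if l = 0 then d0 else d) : ℝ) ∧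
        (fcMaxRegions L (fun l => if l = 0 then d0 else d) : ℝ)
          ≤ c2 * (d : ℝ) ^ (L * d0) := by
  have hd0' : (0:ℝ) < d0 := by exact_mod_cast hd0
  refine ⟨(1 / (2 * (d0 : ℝ))) ^ (L * d0), 2 ^ (L * d0), by positivity, by positivity,
    2 * d0, ?_⟩
  intro d hd
  have hd1 : 1 ≤ d := by omega
  set m := d / d0 with hmdef
  have hm1 : 1 ≤ m := (Nat.le_div_iff_mul_le hd0).mpr (by omega)
  have hdm : d0 * m ≤ d := by rw [Nat.mul_comm]; exact Nat.div_mul_le_self d d0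
  have hub := fcMax_ub L d0 d
  have hlb := fcMax_lb L d0 d m hd0 hm1 hdm
  have hfn : (fun l => if l = 0 then d0 else d) = dfun d0 d := rfl
  rw [hfn]
  constructor
  · have hcast : ((m : ℝ)) ^ (L * d0) ≤ (fcMaxRegions L (dfun d0 d) : ℝ) := by
      exact_mod_cast hlb
    refine le_trans ?_ hcast
    have h2d0 : (0:ℝ) < 2 * d0 := by positivity
    have hnat : d ≤ 2 * (d0 * m) := by
      have h1 : d0 * m + d % d0 = d := by rw [hmdef]; exact Nat.div_add_mod d d0
      have h2 : d % d0 < d0 := Nat.mod_lt d hd0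
      omega
    have hdle : (d : ℝ) ≤ 2 * d0 * m := by
      calc (d:ℝ) ≤ 2 * ((d0 * m : ℕ) : ℝ) := by exact_mod_cast hnat
        _ = 2 * d0 * m := by push_cast; ring
    have hdiv : (d : ℝ) / (2 * d0) ≤ (m : ℝ) := by
      rw [div_le_iff₀ h2d0]
      exact le_trans hdle (le_of_eq (by ring))
    calc (1 / (2 * (d0:ℝ))) ^ (L * d0) * (d:ℝ) ^ (L * d0)
        = ((d:ℝ) / (2 * d0)) ^ (L * d0) := by
          rw [← mul_pow]
          congr 1
          ring
      _ ≤ (m:ℝ) ^ (L * d0) := pow_le_pow_left₀ (by positivity) hdiv _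
  · have hcast : (fcMaxRegions L (dfun d0 d) : ℝ) ≤ ((d:ℝ) + 1) ^ (d0 * L) := by
      calc (fcMaxRegions L (dfun d0 d) : ℝ) ≤ ((((d + 1) ^ d0) ^ L : ℕ) : ℝ) :=
            Nat.cast_le.mpr hub
        _ = ((d:ℝ) + 1) ^ (d0 * L) := by push_cast; rw [← pow_mul]
    refine le_trans hcast ?_
    rw [Nat.mul_comm d0 L]
    have hdd : (d:ℝ) + 1 ≤ 2 * d := by
      have h1 : (1:ℝ) ≤ d := by exact_mod_cast hd1
      linarith
    calc ((d:ℝ) + 1) ^ (L * d0) ≤ (2 * d) ^ (L * d0) :=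
          pow_le_pow_left₀ (by positivity) hdd _
      _ = 2 ^ (L * d0) * (d:ℝ) ^ (L * d0) := mul_pow _ _ _


end
end

section
/- Fix the input dimension n0⁽¹⁾×n0⁽²⁾×d0, filter spatial dimension f1⁽¹⁾×f1⁽²⁾ and stride s1, and for each m let N2(m) be the one-layer ReLU CNN with m filters of dimension f1⁽¹⁾×f1⁽²⁾×d0, so that N2(m) has P(m) = f1⁽¹⁾·f1⁽²⁾·d0·m + m parameters. Then there exist a constant c > 0 and M such that for all m ≥ M, R_{N2(m)} / P(m) ≤ c·m^{d0·n0⁽¹⁾·n0⁽²⁾ − 1}. -/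
open Finset

noncomputable section

/-- Extend a finite 3-dimensional array (an element of `ℝ^{p×q×r}`) to all of `ℕ³` by zero. -/
def inputExt {p q r : ℕ} (X : Fin p → Fin q → Fin r → ℝ) : ℕ → ℕ → ℕ → ℝ :=
  fun i j k => if h : i < p ∧ j < q ∧ k < r then X ⟨i, h.1⟩ ⟨j, h.2.1⟩ ⟨k, h.2.2⟩ else 0

/-- Pre-activation `Z_{i,j,k}(X;θ)` of a one-layer CNN with stride `s1`
(0-based spatial indices `i j`). -/
def convZ {f1 f2 d0 d1 : ℕ} (s1 : ℕ)
    (W : Fin d1 → Fin f1 → Fin f2 → Fin d0 → ℝ) (B : Fin d1 → ℝ)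
    (x : ℕ → ℕ → ℕ → ℝ) (i j : ℕ) (k : Fin d1) : ℝ :=
  (∑ a : Fin f1, ∑ b : Fin f2, ∑ c : Fin d0,
    W k a b c * x (a.1 + i * s1) (b.1 + j * s1) c.1) + B k

/-- The activation region `R(P;θ)` of a one-layer ReLU CNN: the hidden layer has spatial
dimensions `n1⁽¹⁾ = ⌊(n01−f1)/s1⌋+1` and `n1⁽²⁾ = ⌊(n02−f2)/s1⌋+1`, and `P i j k = true`
encodes the sign `+1`, `P i j k = false` the sign `−1`. -/
def convRegion (n01 n02 d0 f1 f2 s1 d1 : ℕ)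
    (W : Fin d1 → Fin f1 → Fin f2 → Fin d0 → ℝ) (B : Fin d1 → ℝ)
    (P : ℕ → ℕ → ℕ → Bool) : Set (Fin n01 → Fin n02 → Fin d0 → ℝ) :=
  {X | ∀ i j, i < (n01 - f1) / s1 + 1 → j < (n02 - f2) / s1 + 1 → ∀ k : Fin d1,
    if P i j k.1 then 0 < convZ s1 W B (inputExt X) i j k
    else convZ s1 W B (inputExt X) i j k < 0}

/-- `R_{N,θ}`: the number of (distinct) nonempty activation regions. -/
def convNumRegions (n01 n02 d0 f1 f2 s1 d1 : ℕ)
    (W : Fin d1 → Fin f1 → Fin f2 → Fin d0 → ℝ) (B : Fin d1 → ℝ) : ℕ :=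
  Set.ncard {R : Set (Fin n01 → Fin n02 → Fin d0 → ℝ) |
    (∃ P, R = convRegion n01 n02 d0 f1 f2 s1 d1 W B P) ∧ R.Nonempty}

/-- `R_N = max_θ R_{N,θ}`. -/
def convMaxRegions (n01 n02 d0 f1 f2 s1 d1 : ℕ) : ℕ :=
  sSup {m | ∃ W B, m = convNumRegions n01 n02 d0 f1 f2 s1 d1 W B}

/-- `S_{i,j}`: the set of (0-based) indexes of the input neurons involved in the computation
of the pre-activations at spatial position `p = (i,j)`. -/
def windowSet (f1 f2 d0 s1 : ℕ) (p : ℕ × ℕ) : Finset (ℕ × ℕ × ℕ) :=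
  (Finset.range f1 ×ˢ Finset.range f2 ×ˢ Finset.range d0).image
    (fun q => (q.1 + p.1 * s1, q.2.1 + p.2 * s1, q.2.2))

/-- `K_N`: families `(t_{i,j})_{(i,j) ∈ I_N}` of nonnegative integers such that
`∑_{(i,j)∈J} t_{i,j} ≤ #(∪_{(i,j)∈J} S_{i,j})` for every `J ⊆ I_N`. -/
def convKN (n01 n02 d0 f1 f2 s1 : ℕ) :
    Set (Fin ((n01 - f1) / s1 + 1) × Fin ((n02 - f2) / s1 + 1) → ℕ) :=
  {t | ∀ J : Finset (Fin ((n01 - f1) / s1 + 1) × Fin ((n02 - f2) / s1 + 1)),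
    ∑ p ∈ J, t p ≤ (J.biUnion (fun p => windowSet f1 f2 d0 s1 (p.1.1, p.2.1))).card}

/-- The quantity `∑_{t ∈ K_N} ∏_{(i,j) ∈ I_N} C(d1, t_{i,j})`. -/
def convRNFormula (n01 n02 d0 f1 f2 s1 d1 : ℕ) : ℕ :=
  ∑ᶠ t ∈ convKN n01 n02 d0 f1 f2 s1,
    ∏ p : Fin ((n01 - f1) / s1 + 1) × Fin ((n02 - f2) / s1 + 1), d1.choose (t p)

namespace St17

noncomputable def eF {ι : Type} [Fintype ι] (g : (ι → ℝ) × ℝ) (x : ι → ℝ) : ℝ :=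
  (∑ i, g.1 i * x i) + g.2

def rlz {ι κ : Type} [Fintype ι] (F : κ → (ι → ℝ) × ℝ) : Set (κ → Bool) :=
  {σ | ∃ x, ∀ k, if σ k then 0 < eF (F k) x else eF (F k) x < 0}

lemma sum_split {ι : Type} [Fintype ι] [DecidableEq ι] (i0 : ι) (f : ι → ℝ) :
    ∑ i, f i = f i0 + ∑ j : {i : ι // i ≠ i0}, f j.1 := by
  rw [← Finset.sum_subtype (Finset.univ.erase i0) (fun x => by simp) f,
    Finset.add_sum_erase _ f (Finset.mem_univ i0)]

lemma eF_combo {ι : Type} [Fintype ι] (g : (ι → ℝ) × ℝ) (u v : ι → ℝ) (s t : ℝ)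
    (h : s + t = 1) :
    eF g (fun i => s * u i + t * v i) = s * eF g u + t * eF g v := by
  have h1 : ∀ i, g.1 i * (s * u i + t * v i) = s * (g.1 i * u i) + t * (g.1 i * v i) :=
    fun i => by ring
  simp only [eF]
  simp_rw [h1]
  rw [Finset.sum_add_distrib, ← Finset.mul_sum, ← Finset.mul_sum]
  linear_combination (-1 : ℝ) * g.2 * h

section subst
variable {ι : Type} [Fintype ι] [DecidableEq ι] (ℓ : (ι → ℝ) × ℝ) (i0 : ι)

noncomputable def phi : ({i : ι // i ≠ i0} → ℝ) → ι → ℝ := fun y i =>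
  if h : i = i0 then (-(ℓ.2 + ∑ j : {i : ι // i ≠ i0}, ℓ.1 j.1 * y j)) / ℓ.1 i0
  else y ⟨i, h⟩

noncomputable def compForm (g : (ι → ℝ) × ℝ) : ({i : ι // i ≠ i0} → ℝ) × ℝ :=
  (fun j => g.1 j.1 - g.1 i0 * ℓ.1 j.1 / ℓ.1 i0, g.2 - g.1 i0 * ℓ.2 / ℓ.1 i0)

lemma eF_phi (g : (ι → ℝ) × ℝ) (y : {i : ι // i ≠ i0} → ℝ) :
    eF g (phi ℓ i0 y) =
      g.1 i0 * ((-(ℓ.2 + ∑ j : {i : ι // i ≠ i0}, ℓ.1 j.1 * y j)) / ℓ.1 i0)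
      + (∑ j : {i : ι // i ≠ i0}, g.1 j.1 * y j) + g.2 := by
  rw [eF, sum_split i0]
  have h1 : phi ℓ i0 y i0 = (-(ℓ.2 + ∑ j : {i : ι // i ≠ i0}, ℓ.1 j.1 * y j)) / ℓ.1 i0 := by
    simp [phi]
  have h2 : ∀ j : {i : ι // i ≠ i0}, phi ℓ i0 y j.1 = y j := fun j => by
    simp [phi, j.2]
  simp_rw [h1, h2]

lemma eF_ell_phi (hL : ℓ.1 i0 ≠ 0) (y : {i : ι // i ≠ i0} → ℝ) :
    eF ℓ (phi ℓ i0 y) = 0 := by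
  rw [eF_phi]
  field_simp
  ring

lemma eF_comp (hL : ℓ.1 i0 ≠ 0) (g : (ι → ℝ) × ℝ) (y : {i : ι // i ≠ i0} → ℝ) :
    eF (compForm ℓ i0 g) y = eF g (phi ℓ i0 y) := by
  rw [eF_phi, eF, compForm]
  have h1 : ∀ j : {i : ι // i ≠ i0},
      (g.1 j.1 - g.1 i0 * ℓ.1 j.1 / ℓ.1 i0) * y j
        = g.1 j.1 * y j - (g.1 i0 / ℓ.1 i0) * (ℓ.1 j.1 * y j) := fun j => by ring
  simp only
  simp_rw [h1]
  rw [Finset.sum_sub_distrib, ← Finset.mul_sum]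
  field_simp
  ring

lemma phi_eq (hL : ℓ.1 i0 ≠ 0) (w : ι → ℝ) (hw : eF ℓ w = 0) :
    phi ℓ i0 (fun j => w j.1) = w := by
  funext i
  rw [phi]
  split_ifs with h
  · subst h
    rw [eF, sum_split i] at hw
    field_simp
    linarith
  · rfl

end subst

/-- The pair/crossing lemma: if a tail sign vector `τ` is realized both with `eF ℓ x > 0`
and with `eF ℓ x < 0`, then it is realized on the hyperplane `eF ℓ = 0`. -/
lemma crossing {ι : Type} [Fintype ι] {n : ℕ} (ℓ : (ι → ℝ) × ℝ)
    (F' : Fin n → (ι → ℝ) × ℝ) (τ : Fin n → Bool)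
    (u v : ι → ℝ) (hu : 0 < eF ℓ u) (hv : eF ℓ v < 0)
    (hut : ∀ k, if τ k then 0 < eF (F' k) u else eF (F' k) u < 0)
    (hvt : ∀ k, if τ k then 0 < eF (F' k) v else eF (F' k) v < 0) :
    ∃ w : ι → ℝ, eF ℓ w = 0 ∧
      ∀ k, if τ k then 0 < eF (F' k) w else eF (F' k) w < 0 := by
  set a := eF ℓ u with ha
  set b := eF ℓ v with hb
  have hab : 0 < a - b := by linarith
  set t : ℝ := a / (a - b) with ht
  set s : ℝ := 1 - t with hs
  have hst : s + t = 1 := by ring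
  have ht0 : 0 < t := div_pos hu hab
  have hs0 : 0 < s := by
    rw [hs, ht, sub_pos, div_lt_one hab]
    linarith
  refine ⟨fun i => s * u i + t * v i, ?_, ?_⟩
  · rw [eF_combo ℓ u v s t hst, ← ha, ← hb, hs, ht]
    field_simp
    ring
  · intro k
    have := eF_combo (F' k) u v s t hst
    have h1 := hut k
    have h2 := hvt k
    by_cases hτ : τ k
    · rw [if_pos hτ] at h1 h2 ⊢
      rw [this]
      positivity
    · rw [if_neg hτ] at h1 h2 ⊢
      rw [this]
      nlinarith

lemma rlz_card_le : ∀ (d : ℕ) (ι : Type) [Fintype ι], Fintype.card ι = d →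
    ∀ (n : ℕ) (F : Fin n → (ι → ℝ) × ℝ), (rlz F).ncard ≤ (n + 1) ^ d := by
  intro d
  induction d using Nat.strong_induction_on with
  | _ d IH =>
  intro ι _ hcard n
  induction n with
  | zero =>
    intro F
    calc (rlz F).ncard ≤ (Set.univ : Set (Fin 0 → Bool)).ncard :=
          Set.ncard_le_ncard (Set.subset_univ _) (Set.toFinite _)
      _ = 1 := by simp [Set.ncard_univ, Nat.card_eq_fintype_card]
      _ ≤ (0 + 1) ^ d := by simp
  | succ n IHn =>
    intro F
    classical
    set ℓ := F 0 with hl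
    set F' : Fin n → (ι → ℝ) × ℝ := fun k => F k.succ with hF'
    set π : (Fin (n + 1) → Bool) → (Fin n → Bool) := fun σ => σ ∘ Fin.succ with hπ
    set St := {σ | σ ∈ rlz F ∧ σ 0 = true} with hSt
    set Sf := {σ | σ ∈ rlz F ∧ σ 0 = false} with hSf
    have hsplit : rlz F = St ∪ Sf := by
      ext σ
      by_cases h : σ 0 = true
      · simp [hSt, hSf, h]
      · simp [hSt, hSf, h]
    have himg : ∀ σ ∈ rlz F, π σ ∈ rlz F' := by
      rintro σ ⟨x, hx⟩
      exact ⟨x, fun k => hx k.succ⟩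
    have hinjt : Set.InjOn π St := by
      rintro σ ⟨_, hσ⟩ σ' ⟨_, hσ'⟩ h
      funext k
      refine Fin.cases ?_ (fun i => ?_) k
      · rw [hσ, hσ']
      · exact congrFun h i
    have hinjf : Set.InjOn π Sf := by
      rintro σ ⟨_, hσ⟩ σ' ⟨_, hσ'⟩ h
      funext k
      refine Fin.cases ?_ (fun i => ?_) k
      · rw [hσ, hσ']
      · exact congrFun h i
    have hsub : π '' St ∪ π '' Sf ⊆ rlz F' := by
      rintro τ (⟨σ, ⟨hσ, _⟩, rfl⟩ | ⟨σ, ⟨hσ, _⟩, rfl⟩) <;> exact himg σ hσ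
    -- the intersection is realized on the hyperplane
    have hint : ∀ τ ∈ π '' St ∩ π '' Sf, ∃ w : ι → ℝ, eF ℓ w = 0 ∧
        ∀ k, if τ k then 0 < eF (F' k) w else eF (F' k) w < 0 := by
      rintro τ ⟨⟨σ, ⟨⟨u, hu⟩, hσ0⟩, rfl⟩, ⟨σ', ⟨⟨v, hv⟩, hσ'0⟩, hσ'⟩⟩
      have hu0 : 0 < eF ℓ u := by have := hu 0; rwa [hσ0, if_pos rfl] at this
      have hv0 : eF ℓ v < 0 := by have := hv 0; rwa [hσ'0, if_neg (by simp)] at this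
      refine crossing ℓ F' (π σ) u v hu0 hv0 (fun k => hu k.succ) (fun k => ?_)
      have : π σ' k = π σ k := congrFun hσ' k
      rw [← this]
      exact hv k.succ
    have hcount : (rlz F).ncard ≤ (n + 1) ^ d + (π '' St ∩ π '' Sf).ncard := by
      calc (rlz F).ncard ≤ St.ncard + Sf.ncard := by
            rw [hsplit]; exact Set.ncard_union_le _ _
        _ = (π '' St).ncard + (π '' Sf).ncard := by
            rw [Set.ncard_image_of_injOn hinjt, Set.ncard_image_of_injOn hinjf]
        _ = (π '' St ∪ π '' Sf).ncard + (π '' St ∩ π '' Sf).ncard := by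
            rw [Set.ncard_union_add_ncard_inter _ _ (Set.toFinite _) (Set.toFinite _)]
        _ ≤ (n + 1) ^ d + (π '' St ∩ π '' Sf).ncard := by
            have := Set.ncard_le_ncard hsub (Set.toFinite _)
            have h2 := IHn F'
            omega
    by_cases hzero : ℓ.1 = 0
    · -- constant form: the intersection is empty
      have : π '' St ∩ π '' Sf = ∅ := by
        rw [Set.eq_empty_iff_forall_notMem]
        intro τ hτ
        obtain ⟨w, hw, -⟩ := hint τ hτ
        rcases hτ with ⟨⟨σ, ⟨⟨u, hu⟩, hσ0⟩, rfl⟩, ⟨σ', ⟨⟨v, hv⟩, hσ'0⟩, hσ'⟩⟩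
        have hu0 : 0 < eF ℓ u := by have := hu 0; rwa [hσ0, if_pos rfl] at this
        have hv0 : eF ℓ v < 0 := by have := hv 0; rwa [hσ'0, if_neg (by simp)] at this
        have hc : ∀ x : ι → ℝ, eF ℓ x = ℓ.2 := by
          intro x; rw [eF, hzero]; simp
        rw [hc u] at hu0; rw [hc v] at hv0; linarith
      rw [this] at hcount
      simp only [Set.ncard_empty, add_zero] at hcount
      calc (rlz F).ncard ≤ (n + 1) ^ d := hcount
        _ ≤ (n + 1 + 1) ^ d := Nat.pow_le_pow_left (by omega) d
    · -- nonconstant: use the hyperplane, of dimension d - 1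
      obtain ⟨i0, hi0⟩ : ∃ i0, ℓ.1 i0 ≠ 0 := by
        by_contra h
        push_neg at h
        exact hzero (funext h)
      have hd1 : 1 ≤ d := by
        rw [← hcard]
        exact Fintype.card_pos_iff.mpr ⟨i0⟩
      have hcard' : Fintype.card {i : ι // i ≠ i0} = d - 1 := by
        rw [Fintype.card_subtype_compl, hcard, Fintype.card_subtype_eq]
      have hsubint : π '' St ∩ π '' Sf ⊆ rlz (fun k => compForm ℓ i0 (F' k)) := by
        intro τ hτ
        obtain ⟨w, hw, hwk⟩ := hint τ hτ
        refine ⟨fun j => w j.1, fun k => ?_⟩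
        rw [eF_comp ℓ i0 hi0, phi_eq ℓ i0 hi0 w hw]
        exact hwk k
      have hIH := IH (d - 1) (by omega) {i : ι // i ≠ i0} hcard' n
        (fun k => compForm ℓ i0 (F' k))
      have hintcard : (π '' St ∩ π '' Sf).ncard ≤ (n + 1) ^ (d - 1) :=
        le_trans (Set.ncard_le_ncard hsubint (Set.toFinite _)) hIH
      have hfinal : (n + 1) ^ d + (n + 1) ^ (d - 1) ≤ (n + 2) ^ d := by
        obtain ⟨e, rfl⟩ : ∃ e, d = e + 1 := ⟨d - 1, by omega⟩
        simp only [Nat.add_sub_cancel]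
        calc (n + 1) ^ (e + 1) + (n + 1) ^ e
            = (n + 2) * (n + 1) ^ e := by ring
          _ ≤ (n + 2) * (n + 2) ^ e :=
              Nat.mul_le_mul_left _ (Nat.pow_le_pow_left (by omega) e)
          _ = (n + 2) ^ (e + 1) := by ring
      calc (rlz F).ncard ≤ (n + 1) ^ d + (n + 1) ^ (d - 1) := by omega
        _ ≤ (n + 2) ^ d := hfinal
        _ = (n + 1 + 1) ^ d := by ring_nf


lemma rlz_card_le' {ι κ : Type} [Fintype ι] [Fintype κ] (F : κ → (ι → ℝ) × ℝ) :
    (rlz F).ncard ≤ (Fintype.card κ + 1) ^ (Fintype.card ι) := by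
  classical
  set e := Fintype.equivFin κ with he
  have himg : rlz (F ∘ e.symm) = (fun σ : κ → Bool => σ ∘ e.symm) '' rlz F := by
    ext τ
    constructor
    · rintro ⟨x, hx⟩
      refine ⟨τ ∘ e, ⟨x, fun k => ?_⟩, ?_⟩
      · have := hx (e k)
        simpa using this
      · funext k; simp
    · rintro ⟨σ, ⟨x, hx⟩, rfl⟩
      exact ⟨x, fun k => hx (e.symm k)⟩
  have hinj : Function.Injective (fun σ : κ → Bool => σ ∘ e.symm) := by
    intro a b h
    funext k
    have := congrFun h (e k)
    simpa using this
  calc (rlz F).ncard = (rlz (F ∘ e.symm)).ncard := by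
        rw [himg, Set.ncard_image_of_injective _ hinj]
    _ ≤ (Fintype.card κ + 1) ^ (Fintype.card ι) := rlz_card_le _ _ rfl _ _


lemma sum_ite_point {A B C : ℕ} (u v : ℕ) (c : Fin C) (g : Fin A × Fin B × Fin C → ℝ) :
    (∑ p : Fin A × Fin B × Fin C, if p.1.1 = u ∧ p.2.1.1 = v ∧ p.2.2 = c then g p else 0)
      = if h : u < A ∧ v < B then g (⟨u, h.1⟩, ⟨v, h.2⟩, c) else 0 := by
  split_ifs with h
  · rw [Finset.sum_eq_single (⟨u, h.1⟩, ⟨v, h.2⟩, c)]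
    · simp
    · rintro p - hne
      rw [if_neg]
      rintro ⟨h1, h2, h3⟩
      exact hne (by simp_all [Prod.ext_iff, Fin.ext_iff])
    · simp
  · apply Finset.sum_eq_zero
    rintro p -
    rw [if_neg]
    rintro ⟨h1, h2, h3⟩
    exact h ⟨h1 ▸ p.1.2, h2 ▸ p.2.1.2⟩

/-- The affine form (coefficients and constant) of the pre-activation `Z_{i,j,k}`. -/
noncomputable def cnnForm {f1 f2 d0 m : ℕ} (n01 n02 s1 : ℕ)
    (W : Fin m → Fin f1 → Fin f2 → Fin d0 → ℝ) (B : Fin m → ℝ)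
    (p : Fin ((n01 - f1) / s1 + 1) × Fin ((n02 - f2) / s1 + 1) × Fin m) :
    ((Fin n01 × Fin n02 × Fin d0 → ℝ) × ℝ) :=
  (fun q => ∑ a : Fin f1, ∑ b : Fin f2, ∑ c : Fin d0,
      if q.1.1 = a.1 + p.1.1 * s1 ∧ q.2.1.1 = b.1 + p.2.1.1 * s1 ∧ q.2.2 = c
      then W p.2.2 a b c else 0,
    B p.2.2)

lemma eF_cnn {f1 f2 d0 m : ℕ} (n01 n02 s1 : ℕ)
    (W : Fin m → Fin f1 → Fin f2 → Fin d0 → ℝ) (B : Fin m → ℝ)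
    (p : Fin ((n01 - f1) / s1 + 1) × Fin ((n02 - f2) / s1 + 1) × Fin m)
    (X : Fin n01 → Fin n02 → Fin d0 → ℝ) :
    eF (cnnForm n01 n02 s1 W B p) (fun q => X q.1 q.2.1 q.2.2)
      = convZ s1 W B (inputExt X) p.1.1 p.2.1.1 p.2.2 := by
  rw [eF, convZ, cnnForm]
  congr 1
  simp only [Finset.sum_mul, ite_mul, zero_mul]
  rw [Finset.sum_comm]
  refine Finset.sum_congr rfl fun a _ => ?_
  rw [Finset.sum_comm]
  refine Finset.sum_congr rfl fun b _ => ?_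
  rw [Finset.sum_comm]
  refine Finset.sum_congr rfl fun c _ => ?_
  rw [sum_ite_point (a.1 + p.1.1 * s1) (b.1 + p.2.1.1 * s1) c
    (fun q => W p.2.2 a b c * X q.1 q.2.1 q.2.2), inputExt]
  split_ifs with h1 h2 h2
  · simp
  · exact absurd ⟨h1.1, h1.2, c.2⟩ h2
  · exact absurd ⟨h2.1, h2.2.1⟩ h1
  · simp

lemma convNumRegions_le (n01 n02 d0 f1 f2 s1 m : ℕ)
    (W : Fin m → Fin f1 → Fin f2 → Fin d0 → ℝ) (B : Fin m → ℝ) :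
    convNumRegions n01 n02 d0 f1 f2 s1 m W B ≤
      (((n01 - f1) / s1 + 1) * (((n02 - f2) / s1 + 1) * m) + 1)
        ^ (n01 * (n02 * d0)) := by
  classical
  set n1 := (n01 - f1) / s1 + 1
  set n2 := (n02 - f2) / s1 + 1
  set F := cnnForm n01 n02 s1 W B with hF
  set f : Set (Fin n01 → Fin n02 → Fin d0 → ℝ) → ((Fin n1 × Fin n2 × Fin m) → Bool) :=
    fun R => if h : ∃ P, R = convRegion n01 n02 d0 f1 f2 s1 m W B P
      then fun p => h.choose p.1.1 p.2.1.1 p.2.2.1 else fun _ => false with hf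
  have hmaps : ∀ R ∈ {R : Set (Fin n01 → Fin n02 → Fin d0 → ℝ) |
      (∃ P, R = convRegion n01 n02 d0 f1 f2 s1 m W B P) ∧ R.Nonempty},
      f R ∈ rlz F := by
    rintro R ⟨h1, X, hX⟩
    have hfR : f R = fun p => h1.choose p.1.1 p.2.1.1 p.2.2.1 := dif_pos h1
    have hP := h1.choose_spec
    rw [hP] at hX
    refine ⟨fun q => X q.1 q.2.1 q.2.2, fun p => ?_⟩
    rw [hfR, eF_cnn]
    exact hX p.1.1 p.2.1.1 p.1.2 p.2.1.2 p.2.2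
  have hinj : Set.InjOn f {R : Set (Fin n01 → Fin n02 → Fin d0 → ℝ) |
      (∃ P, R = convRegion n01 n02 d0 f1 f2 s1 m W B P) ∧ R.Nonempty} := by
    rintro R ⟨h1, -⟩ R' ⟨h1', -⟩ hff
    have hfR : f R = fun p : Fin n1 × Fin n2 × Fin m =>
        h1.choose p.1.1 p.2.1.1 p.2.2.1 := dif_pos h1
    have hfR' : f R' = fun p : Fin n1 × Fin n2 × Fin m =>
        h1'.choose p.1.1 p.2.1.1 p.2.2.1 := dif_pos h1'
    have hPP : ∀ i j, i < n1 → j < n2 → ∀ k : Fin m,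
        h1.choose i j k.1 = h1'.choose i j k.1 := by
      intro i j hi hj k
      have := congrFun hff (⟨i, hi⟩, ⟨j, hj⟩, k)
      rw [hfR, hfR'] at hff
      exact congrFun hff (⟨i, hi⟩, ⟨j, hj⟩, k)
    rw [h1.choose_spec, h1'.choose_spec]
    unfold convRegion
    ext X
    simp only [Set.mem_setOf_eq]
    constructor
    · intro hX i j hi hj k
      have hx := hX i j hi hj k
      by_cases hc : h1.choose i j k.1 = true
      · have hc' : h1'.choose i j k.1 = true := by rw [← hPP i j hi hj k]; exact hc
        exact Eq.mpr (if_pos hc') (Eq.mp (if_pos hc) hx)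
      · have hc' : ¬ h1'.choose i j k.1 = true := by rw [← hPP i j hi hj k]; exact hc
        exact Eq.mpr (if_neg hc') (Eq.mp (if_neg hc) hx)
    · intro hX i j hi hj k
      have hx := hX i j hi hj k
      by_cases hc : h1'.choose i j k.1 = true
      · have hc' : h1.choose i j k.1 = true := by rw [hPP i j hi hj k]; exact hc
        exact Eq.mpr (if_pos hc') (Eq.mp (if_pos hc) hx)
      · have hc' : ¬ h1.choose i j k.1 = true := by rw [hPP i j hi hj k]; exact hc
        exact Eq.mpr (if_neg hc') (Eq.mp (if_neg hc) hx)
  calc convNumRegions n01 n02 d0 f1 f2 s1 m W B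
      ≤ (rlz F).ncard :=
        Set.ncard_le_ncard_of_injOn f hmaps hinj (Set.toFinite _)
    _ ≤ (Fintype.card (Fin n1 × Fin n2 × Fin m) + 1)
          ^ (Fintype.card (Fin n01 × Fin n02 × Fin d0)) := rlz_card_le' F
    _ = (n1 * (n2 * m) + 1) ^ (n01 * (n02 * d0)) := by
        simp only [Fintype.card_prod, Fintype.card_fin]

end St17

/-- (Theorem 6, shallow CNNs.) For the one-layer ReLU CNN with `m` filters,
which has `P(m) = f1⁽¹⁾·f1⁽²⁾·d0·m + m` parameters, the number of linear regions per parameter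
satisfies `R_{N2(m)}/P(m) ≤ c·m^{d0·n0⁽¹⁾·n0⁽²⁾ − 1}` for all large `m`. -/
theorem statement_17 (n01 n02 d0 f1 f2 s1 : ℕ)
    (hd0 : 0 < d0) (hf1p : 0 < f1) (hf2p : 0 < f2) (hs : 0 < s1)
    (hf1 : f1 ≤ n01) (hf2 : f2 ≤ n02) :
    ∃ c : ℝ, 0 < c ∧ ∃ M : ℕ, ∀ m ≥ M,
      (convMaxRegions n01 n02 d0 f1 f2 s1 m : ℝ) / ((f1 * f2 * d0 * m + m : ℕ) : ℝ)
        ≤ c * (m : ℝ) ^ (d0 * n01 * n02 - 1) := by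
  classical
  set n1 := (n01 - f1) / s1 + 1 with hn1
  set n2 := (n02 - f2) / s1 + 1 with hn2
  set D := n01 * (n02 * d0) with hD
  have hn01 : 0 < n01 := lt_of_lt_of_le hf1p hf1
  have hn02 : 0 < n02 := lt_of_lt_of_le hf2p hf2
  have hE : d0 * n01 * n02 = D := by rw [hD]; ring
  have hD1 : 1 ≤ D := by
    have : 0 < D := by rw [hD]; exact Nat.mul_pos hn01 (Nat.mul_pos hn02 hd0)
    omega
  have hcpos : (0 : ℝ) < ((n1 * n2 + 1 : ℕ) : ℝ) ^ D := by
    have : (0 : ℝ) < ((n1 * n2 + 1 : ℕ) : ℝ) := by exact_mod_cast Nat.succ_pos _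
    positivity
  refine ⟨((n1 * n2 + 1 : ℕ) : ℝ) ^ D, hcpos, 1, fun m hm => ?_⟩
  have hmax : convMaxRegions n01 n02 d0 f1 f2 s1 m ≤ (n1 * (n2 * m) + 1) ^ D := by
    apply csSup_le
    · exact ⟨_, (fun _ _ _ _ => (0 : ℝ)), (fun _ => (0 : ℝ)), rfl⟩
    · rintro x ⟨W, B, rfl⟩
      exact St17.convNumRegions_le n01 n02 d0 f1 f2 s1 m W B
  have hnat : (n1 * (n2 * m) + 1) ^ D
      ≤ (n1 * n2 + 1) ^ D * m ^ (d0 * n01 * n02 - 1) * (f1 * f2 * d0 * m + m) := by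
    have h1 : n1 * (n2 * m) + 1 ≤ (n1 * n2 + 1) * m := by nlinarith [hm]
    calc (n1 * (n2 * m) + 1) ^ D ≤ ((n1 * n2 + 1) * m) ^ D := Nat.pow_le_pow_left h1 D
      _ = (n1 * n2 + 1) ^ D * m ^ D := mul_pow _ _ _
      _ = (n1 * n2 + 1) ^ D * (m ^ (d0 * n01 * n02 - 1) * m) := by
          rw [← pow_succ m (d0 * n01 * n02 - 1), show (d0 * n01 * n02 - 1) + 1 = D by omega]
      _ ≤ (n1 * n2 + 1) ^ D * m ^ (d0 * n01 * n02 - 1) * (f1 * f2 * d0 * m + m) := by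
          rw [mul_assoc ((n1 * n2 + 1) ^ D) (m ^ (d0 * n01 * n02 - 1))]
          exact Nat.mul_le_mul_left _ (Nat.mul_le_mul_left _ (Nat.le_add_left m _))
  have hden : (0 : ℝ) < ((f1 * f2 * d0 * m + m : ℕ) : ℝ) := by
    have : 0 < f1 * f2 * d0 * m + m := by omega
    exact_mod_cast this
  rw [div_le_iff₀ hden]
  calc (convMaxRegions n01 n02 d0 f1 f2 s1 m : ℝ)
      ≤ (((n1 * n2 + 1) ^ D * m ^ (d0 * n01 * n02 - 1) * (f1 * f2 * d0 * m + m) : ℕ) : ℝ) := by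
        exact_mod_cast le_trans hmax hnat
    _ = ((n1 * n2 + 1 : ℕ) : ℝ) ^ D * (m : ℝ) ^ (d0 * n01 * n02 - 1)
          * ((f1 * f2 * d0 * m + m : ℕ) : ℝ) := by push_cast; ring

end
end
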